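/- arXiv:math/0412449 — 6 statements merged into one kernel-verified Lean document; each statement's English description precedes it below -/
import Mathlib

section
/- Let n ≥ 2, m ≤ n/2, and let K be the Markov kernel on configurations of m distinct letters chosen from n letters, defined by K(α,β) = P(first m-block = β | second m-block = α) under a uniform random permutation of n letters on the n-cycle. For distinct letters j_1,…,j_k (1 ≤ k ≤ m), letting χ_j(α) be the indicator that letter j appears in α, one has K(χ_{j_1}⋯χ_{j_k})(α) = |λ_k|·(1−χ_{j_1}(α))⋯(1−χ_{j_k}(α)), where |λ_k| = C(n−m−k, m−k)/C(n−m, m). -/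
/-!
Fixing the values of a permutation of `n` letters at `c` given places leaves `(n - c)!`
completions, so `K(α, β) = (n - 2m)! / (n - m)!` when the letters of `β` avoid those of `α`,
and `0` otherwise. Hence `K(χ_{j_1}⋯χ_{j_k})(α)` is `(n - 2m)! / (n - m)!` times the number of
configurations `β` avoiding `α` and containing every `j_i`. That number vanishes if some `j_i`
occurs in `α`; otherwise one chooses the range of `β` among the `m`-sets of the `n - m` free
letters containing the `j_i`, and then its order, giving `C(n - m - k, m - k) · m!`.
-/

open Finset

/-- The conditional-probability kernel `K(α,β) = ν[first m-block = β | second m-block = α]`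
for a uniform random permutation of `n` letters: the number of permutations whose first
`m`-block equals `β` and whose second `m`-block equals `α`, divided by the number of
permutations whose second `m`-block equals `α`.  Configurations over an `m`-block are
injections `Fin m ↪ Fin n`. -/
noncomputable def Kker (n m : ℕ) (h2m : 2 * m ≤ n) (α β : Fin m ↪ Fin n) : ℚ :=
  (((univ : Finset (Equiv.Perm (Fin n))).filter (fun η =>
      (∀ i : Fin m, η ⟨i.val, by have := i.isLt; omega⟩ = β i) ∧
      (∀ i : Fin m, η ⟨m + i.val, by have := i.isLt; omega⟩ = α i))).card : ℚ) /
  (((univ : Finset (Equiv.Perm (Fin n))).filter (fun η =>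
      ∀ i : Fin m, η ⟨m + i.val, by have := i.isLt; omega⟩ = α i)).card : ℚ)

open Function
open scoped Nat

section Counting

variable {ι κ A X : Type*} [Fintype ι] [Fintype κ] [Fintype A] [Fintype X] [DecidableEq X]

theorem card_sum_embedding_extending (v : ι ↪ X) :
    Fintype.card {f : ι ⊕ κ ↪ X // Embedding.inl.trans f = v} =
      (Fintype.card X - Fintype.card ι).descFactorial (Fintype.card κ) := by
  rw [Fintype.card_congr ((Equiv.subtypeEquiv (p := fun f => Embedding.inl.trans f = v)
    Equiv.sumEmbeddingEquivSigmaEmbeddingRestricted fun _ => Iff.rfl).trans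
    (Equiv.sigmaSubtype v)), Fintype.card_embedding_eq, Fintype.card_compl_set,
    Fintype.card_range]

theorem card_embedding_extending [DecidableEq A] (u : ι ↪ A) (v : ι ↪ X) :
    Fintype.card {f : A ↪ X // ∀ i, f (u i) = v i} =
      (Fintype.card X - Fintype.card ι).descFactorial (Fintype.card A - Fintype.card ι) := by
  let e : ι ⊕ ↥(Set.range u)ᶜ ≃ A :=
    (Equiv.sumCongr (Equiv.ofInjective u u.injective) (Equiv.refl _)).trans
      (Equiv.Set.sumCompl _)
  have hcard := card_sum_embedding_extending (κ := ↥(Set.range u)ᶜ) v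
  rw [Fintype.card_compl_set, Fintype.card_range] at hcard
  rw [← hcard]
  refine Fintype.card_congr (Equiv.subtypeEquiv (Equiv.embeddingCongr e.symm (Equiv.refl X))
    fun f => ?_)
  simp [Embedding.ext_iff, e]

theorem card_embedding_map_univ_eq {S : Finset X} (hS : #S = Fintype.card ι) :
    #{f : ι ↪ X | univ.map f = S} = (Fintype.card ι)! := by
  have hmap (f : ι ↪ X) : univ.map f = S ↔ ∀ i, f i ∈ (S : Set X) := by
    refine ⟨fun h i => h ▸ by simp, fun h => eq_of_subset_of_card_le ?_ (by simp [hS])⟩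
    simpa [subset_iff] using h
  rw [filter_congr fun f _ => hmap f, ← Fintype.card_subtype,
    Fintype.card_congr (Equiv.codRestrict ι (S : Set X)), Fintype.card_embedding_eq]
  simp [hS, Nat.descFactorial_self]

theorem card_embedding_map_univ_between {s t : Finset X} (hst : s ⊆ t)
    (hs : #s ≤ Fintype.card ι) :
    #{f : ι ↪ X | univ.map f ⊆ t ∧ s ⊆ univ.map f} =
      (#t - #s).choose (Fintype.card ι - #s) * (Fintype.card ι)! := by
  rw [card_eq_sum_card_fiberwise (f := fun f => univ.map f)
    (t := (t.powersetCard (Fintype.card ι)).filter (s ⊆ ·)) (fun f hf => by simpa using hf),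
    ← card_filter_powersetCard_subset s t _ hst hs, ← smul_eq_mul, ← sum_const]
  refine sum_congr rfl fun S hS => ?_
  rw [mem_filter, mem_powersetCard] at hS
  rw [filter_filter, ← card_embedding_map_univ_eq hS.1.2]
  congr 1
  exact filter_congr fun f _ => ⟨And.right, fun h => ⟨⟨h ▸ hS.1.1, h ▸ hS.2⟩, h⟩⟩

theorem card_perm_extending [DecidableEq A] (u : ι ↪ A) (g : ι → A) :
    Nat.card {σ : Equiv.Perm A // ∀ i, σ (u i) = g i} =
      if Injective g then (Fintype.card A - Fintype.card ι)! else 0 := by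
  rw [Nat.card_eq_fintype_card]
  split_ifs with hg
  · rw [← Nat.descFactorial_self, ← card_embedding_extending u ⟨g, hg⟩]
    exact Fintype.card_congr ((Equiv.embeddingEquivOfFinite A).symm.subtypeEquiv fun _ => Iff.rfl)
  · refine Fintype.card_eq_zero_iff.2 ⟨fun ⟨σ, hσ⟩ => hg fun a b h => ?_⟩
    exact u.injective (σ.injective (by rw [hσ, hσ, h]))

end Counting

theorem Kker_eq_ite (n m : ℕ) (h2m : 2 * m ≤ n) (α β : Fin m ↪ Fin n) :
    Kker n m h2m α β = if ∀ t s, β t ≠ α s then ((n - 2 * m)! / (n - m)! : ℚ) else 0 := by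
  -- `pos (inl i) = i` and `pos (inr i) = m + i` are the places of the two blocks.
  let pos : Fin m ⊕ Fin m ↪ Fin n := finSumFinEquiv.toEmbedding.trans (Fin.castLEEmb (by omega))
  unfold Kker
  rw [← Fintype.card_subtype, ← Fintype.card_subtype, ← Nat.card_eq_fintype_card,
    ← Nat.card_eq_fintype_card, Nat.card_congr (Equiv.subtypeEquivRight
      (q := fun η => ∀ s, η (pos s) = Sum.elim β α s)
      fun _ => by simp only [Sum.forall, Sum.elim_inl, Sum.elim_inr]; rfl)]
  change _ / (Nat.card {η : Equiv.Perm (Fin n) //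
    ∀ i, η (Embedding.inr.trans pos i) = α i} : ℚ) = _
  rw [card_perm_extending, card_perm_extending]
  simp [Sum.elim_injective, β.injective, α.injective, two_mul, ite_div]

theorem Kker_prod_indicator_general (n m k : ℕ) (h2m : 2 * m ≤ n)
    (hkm : k ≤ m) (j : Fin k → Fin n) (hj : Function.Injective j)
    (α : Fin m ↪ Fin n) :
    ∑ β : Fin m ↪ Fin n, Kker n m h2m α β *
        ∏ i : Fin k, (if ∃ t : Fin m, β t = j i then (1 : ℚ) else 0) =
      (((n - m - k).choose (m - k) : ℚ) / ((n - m).choose m : ℚ)) *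
        ∏ i : Fin k, (1 - if ∃ t : Fin m, α t = j i then (1 : ℚ) else 0) := by
  classical
  set J : Finset (Fin n) := univ.map ⟨j, hj⟩
  have hterm (β : Fin m ↪ Fin n) :
      Kker n m h2m α β * ∏ i, (if ∃ t, β t = j i then (1 : ℚ) else 0) =
        ((n - 2 * m)! / (n - m)! : ℚ) *
          if univ.map β ⊆ (univ.map α)ᶜ ∧ J ⊆ univ.map β then 1 else 0 := by
    rw [Kker_eq_ite, Fintype.prod_boole, ite_zero_mul_ite_zero, mul_ite, mul_one, mul_zero]
    congr 1
    simp [J, subset_iff, eq_comm (a := α _)]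
  have one_sub_boole (p : Prop) [Decidable p] :
      1 - (if p then (1 : ℚ) else 0) = if ¬p then 1 else 0 := by
    split_ifs <;> simp
  have hrhs : ∏ i, (1 - if ∃ t, α t = j i then (1 : ℚ) else 0) =
      if J ⊆ (univ.map α)ᶜ then 1 else 0 := by
    simp_rw [one_sub_boole, Fintype.prod_boole]
    simp [J, subset_iff]
  simp_rw [hterm, ← mul_sum, sum_boole, hrhs]
  split_ifs with hJ
  · rw [card_embedding_map_univ_between hJ (by simpa [J] using hkm)]
    simp only [J, card_compl, card_map, card_univ, Fintype.card_fin]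
    rw [Nat.cast_choose ℚ (show m ≤ n - m by omega), show n - m - m = n - 2 * m by omega]
    push_cast
    field_simp
  · rw [filter_false_of_mem fun β _ h => hJ (h.2.trans h.1)]
    simp

/-- for distinct letters `j 0, …, j (k-1)` (with `1 ≤ k ≤ m`), writing
`χ_{j i}(α)` for the indicator that letter `j i` appears in `α`, one has
`K(χ_{j_1}⋯χ_{j_k})(α) = |λ_k| · ∏ (1 − χ_{j_i}(α))` with
`|λ_k| = C(n−m−k, m−k)/C(n−m, m)`. -/
theorem Kker_prod_indicator (n m k : ℕ) (hn : 2 ≤ n) (h2m : 2 * m ≤ n)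
    (hk1 : 1 ≤ k) (hkm : k ≤ m) (j : Fin k → Fin n) (hj : Function.Injective j)
    (α : Fin m ↪ Fin n) :
    ∑ β : Fin m ↪ Fin n, Kker n m h2m α β *
        ∏ i : Fin k, (if ∃ t : Fin m, β t = j i then (1 : ℚ) else 0) =
      (((n - m - k).choose (m - k) : ℚ) / ((n - m).choose m : ℚ)) *
        ∏ i : Fin k, (1 - if ∃ t : Fin m, α t = j i then (1 : ℚ) else 0) :=
  Kker_prod_indicator_general n m k h2m hkm j hj α
end

section
/- Let N ≥ 2, m ≥ 1, and n ≥ N·m. Let I_1,…,I_N be N pairwise disjoint m-blocks in {1,…,n}, and let P be the symmetric Markov kernel on permutations of n letters given by P(σ,ξ) = (1/N) Σ_{k=1}^N ν[η = ξ | η = σ on I_k], where ν is the uniform measure. Then the lowest nonzero eigenvalue μ of 1 − P satisfies μ ≥ (N−2)/(N−1). -/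
/-!
Write `E_k` for the conditional expectation given `η = σ on I_k`, so that `P = N⁻¹ ∑ E_k`, and let
`P f = β f` with `θ = N β - 1`. Applying `E_j` to the eigenvalue equation gives
`θ E_j f = ∑_{k ≠ j} E_j E_k f`. For `k ≠ j` the right side depends on `σ` only through the set
`σ(I_j)`, hence so does `E_j f =: u_j(σ(I_j))`, and `E_j E_k f` is the average of `u_k` over the
`m`-sets disjoint from `σ(I_j)`. Thus `θ C(n-m, m) u_j = K ∑_{k ≠ j} u_k`, where `K` is the
adjacency operator of the Kneser graph on `m`-subsets of `{1, …, n}`. Inclusion–exclusion against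
superset sums triangularises `K`, with eigenvalues `(-1)^i C(n-m-i, m-i)`, `0 ≤ i ≤ m`, while the
matrix `J - I` on the blocks has eigenvalues `N - 1` and `-1`; so `θ C(n-m, m)` is a product of one
eigenvalue of each. Since `(N-1)^i C(n-m-i, m-i) ≤ C(n-m, m)` when `N m ≤ n`, every such product
except `(N-1) C(n-m, m)` (which is `λ = 0`) is at most `C(n-m, m) / (N-1)`, i.e. `β ≤ 1/(N-1)`.
-/

open Finset

/-- The set of permutations agreeing with `σ` on the `m`-block `{a, a+1, …, a+m−1}`. -/
def blockFix (n m a : ℕ) (ha : a + m ≤ n) (σ : Equiv.Perm (Fin n)) :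
    Finset (Equiv.Perm (Fin n)) :=
  (univ : Finset (Equiv.Perm (Fin n))).filter (fun η =>
    ∀ t : Fin m, η ⟨a + t.val, by have := t.isLt; omega⟩ = σ ⟨a + t.val, by have := t.isLt; omega⟩)

/-- The symmetric Markov kernel `P f (σ) = (1/N) Σ_k ν[f | η = σ on I_k]`, where
`I_k` is the `m`-block with left endpoint `a k` and `ν` is the uniform measure on
permutations of `n` letters. -/
noncomputable def Pop (n m N : ℕ) (a : Fin N → ℕ) (ha : ∀ k, a k + m ≤ n)
    (f : Equiv.Perm (Fin n) → ℝ) (σ : Equiv.Perm (Fin n)) : ℝ :=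
  (1 / N) * ∑ k : Fin N,
    (∑ η ∈ blockFix n m (a k) (ha k) σ, f η) / ((blockFix n m (a k) (ha k) σ).card : ℝ)

open Equiv (Perm)

theorem Nat.mul_choose_le_choose_succ_succ {c a b : ℕ} (h : c * (b + 1) ≤ a + 1) :
    c * a.choose b ≤ (a + 1).choose (b + 1) := by
  refine Nat.le_of_mul_le_mul_right ?_ b.succ_pos
  calc c * a.choose b * (b + 1) = c * (b + 1) * a.choose b := by ring
    _ ≤ (a + 1) * a.choose b := Nat.mul_le_mul_right _ h
    _ = (a + 1).choose (b + 1) * (b + 1) := Nat.add_one_mul_choose_eq a b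

theorem Nat.pow_mul_choose_le_choose_add {c a b i : ℕ} (h : c * (b + i) ≤ a + i) :
    c ^ i * a.choose b ≤ (a + i).choose (b + i) := by
  induction i with
  | zero => simp
  | succ i ih =>
    rcases Nat.eq_zero_or_pos c with rfl | hc
    · simp
    have h' : c * (b + i) ≤ a + i := by
      have : c * (b + (i + 1)) = c * (b + i) + c := by ring
      omega
    calc c ^ (i + 1) * a.choose b = c * (c ^ i * a.choose b) := by ring
      _ ≤ c * (a + i).choose (b + i) := Nat.mul_le_mul_left _ (ih h')
      _ ≤ (a + (i + 1)).choose (b + (i + 1)) := Nat.mul_choose_le_choose_succ_succ h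

lemma Finset.sum_powerset_neg_one_pow_card_real {β : Type*} [DecidableEq β] (X : Finset β) :
    ∑ Y ∈ X.powerset, (-1 : ℝ) ^ #Y = if X = ∅ then 1 else 0 := by
  exact_mod_cast sum_powerset_neg_one_pow_card (x := X)

lemma eq_mul_card_sub_one_or_eq_neg {ι : Type*} [Fintype ι] [DecidableEq ι] {w : ι → ℝ}
    (hw : w ≠ 0) {x c : ℝ} (h : ∀ j, x * w j = c * ∑ k ∈ univ.erase j, w k) :
    x = c * (Fintype.card ι - 1) ∨ x = -c := by
  have h' : ∀ j, x * w j = c * (∑ k, w k - w j) := fun j => by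
    rw [h, sum_erase_eq_sub (mem_univ j)]
  rcases eq_or_ne (∑ k, w k) 0 with hs | hs
  · obtain ⟨j, hj⟩ := Function.ne_iff.1 hw
    refine Or.inr (mul_right_cancel₀ hj ?_)
    rw [h', hs]; ring
  · refine Or.inl (mul_right_cancel₀ hs ?_)
    rw [mul_sum, sum_congr rfl fun j _ => h' j, ← mul_sum, sum_sub_distrib, sum_const, card_univ,
      nsmul_eq_mul]
    ring

section KneserSystem

variable {α : Type*} [Fintype α] [DecidableEq α]

noncomputable def supersetSum (m : ℕ) (u : Finset α → ℝ) (Z : Finset α) : ℝ :=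
  ∑ S ∈ powersetCard m univ with Z ⊆ S, u S

/-- On `m`-sets, `disjointSum m` is the adjacency operator of the Kneser graph. -/
noncomputable def disjointSum (m : ℕ) (u : Finset α → ℝ) (Z : Finset α) : ℝ :=
  ∑ T ∈ powersetCard m Zᶜ, u T

variable {m : ℕ} {u : Finset α → ℝ}

lemma supersetSum_of_card_eq {S : Finset α} (hS : #S = m) : supersetSum m u S = u S := by
  refine sum_eq_single_of_mem S (by simp [hS]) fun T hT hTS => ?_
  simp only [mem_filter, mem_powersetCard] at hT
  exact absurd (eq_of_subset_of_card_le hT.2 (by omega)).symm hTS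

lemma card_le_of_supersetSum_ne_zero {Z : Finset α} (h : supersetSum m u Z ≠ 0) : #Z ≤ m := by
  obtain ⟨S, hS, -⟩ := exists_ne_zero_of_sum_ne_zero h
  simp only [mem_filter, mem_powersetCard] at hS
  exact hS.1.2 ▸ card_le_card hS.2

lemma powersetCard_compl_eq_filter (m : ℕ) (Z : Finset α) :
    powersetCard m Zᶜ = (powersetCard m (univ : Finset α)).filter (Disjoint · Z) := by
  ext T
  simp [mem_powersetCard, subset_compl_iff_disjoint_right, and_comm]

lemma disjointSum_eq_sum_powerset (u : Finset α → ℝ) (Z : Finset α) :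
    disjointSum m u Z = ∑ Y ∈ Z.powerset, (-1) ^ #Y * supersetSum m u Y := by
  simp only [supersetSum, mul_sum]
  rw [sum_comm' (t' := powersetCard m univ) (s' := fun S => (Z ∩ S).powerset)
    (fun Y S => by simp only [mem_filter, mem_powerset, subset_inter_iff]; tauto)]
  simp only [← sum_mul, sum_powerset_neg_one_pow_card_real, ite_mul, one_mul, zero_mul,
    disjointSum, powersetCard_compl_eq_filter, sum_filter, disjoint_iff_inter_eq_empty, inter_comm]

lemma supersetSum_disjointSum {Z : Finset α} (hZ : #Z ≤ m) :
    supersetSum m (disjointSum m u) Z =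
      (Fintype.card α - m - #Z).choose (m - #Z) * disjointSum m u Z := by
  simp only [supersetSum, disjointSum, mul_sum]
  rw [sum_comm' (t' := powersetCard m Zᶜ) (s' := fun T => {S ∈ powersetCard m Tᶜ | Z ⊆ S})
    (fun S T => by
      simp only [mem_filter, mem_powersetCard, subset_univ, true_and,
        subset_compl_iff_disjoint_right]
      constructor
      · rintro ⟨⟨hS, hZS⟩, hTS, hT⟩
        exact ⟨⟨⟨hTS.symm, hS⟩, hZS⟩, disjoint_of_subset_right hZS hTS, hT⟩
      · rintro ⟨⟨⟨hTS, hS⟩, hZS⟩, -, hT⟩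
        exact ⟨⟨hS, hZS⟩, hTS.symm, hT⟩)]
  refine sum_congr rfl fun T hT => ?_
  rw [mem_powersetCard, subset_compl_iff_disjoint_right] at hT
  rw [sum_const, card_filter_powersetCard_subset _ _ _
    (subset_compl_iff_disjoint_right.2 hT.1.symm) hZ, card_compl, hT.2, nsmul_eq_mul]

theorem exists_eigenvalue_of_kneser_system {ι : Type*} [Fintype ι] [DecidableEq ι]
    {u : ι → Finset α → ℝ} {x : ℝ}
    (hsys : ∀ j S, #S = m → x * u j S = ∑ k ∈ univ.erase j, disjointSum m (u k) S)
    (hu : ∃ j S, #S = m ∧ u j S ≠ 0) :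
    ∃ i ≤ m, x = (-1) ^ i * (Fintype.card α - m - i).choose (m - i) * (Fintype.card ι - 1) ∨
      x = -((-1) ^ i * (Fintype.card α - m - i).choose (m - i)) := by
  obtain ⟨Z, hZ, hmin⟩ : ∃ Z, (∃ k, supersetSum m (u k) Z ≠ 0) ∧
      ∀ Y : Finset α, #Y < #Z → ∀ k, supersetSum m (u k) Y = 0 := by
    obtain ⟨j, S, hS, hjS⟩ := hu
    obtain ⟨Z, hZ, hmin⟩ := exists_min_image {Z | ∃ k, supersetSum m (u k) Z ≠ 0} card
      ⟨S, mem_filter.2 ⟨mem_univ S, j, by rwa [supersetSum_of_card_eq hS]⟩⟩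
    refine ⟨Z, (mem_filter.1 hZ).2, fun Y hY k => ?_⟩
    by_contra hYk
    exact absurd (hmin Y (mem_filter.2 ⟨mem_univ Y, k, hYk⟩)) (not_le.2 hY)
  obtain ⟨j₀, hj₀⟩ := hZ
  have hZm := card_le_of_supersetSum_ne_zero hj₀
  -- By minimality of `Z`, inclusion–exclusion collapses to its top term.
  have hdisj : ∀ k, disjointSum m (u k) Z = (-1) ^ #Z * supersetSum m (u k) Z := fun k => by
    rw [disjointSum_eq_sum_powerset]
    refine sum_eq_single_of_mem Z (mem_powerset_self Z) fun Y hY hYZ => ?_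
    rw [hmin Y (card_lt_card (ssubset_of_subset_of_ne (mem_powerset.1 hY) hYZ)) k, mul_zero]
  refine ⟨#Z, hZm, eq_mul_card_sub_one_or_eq_neg (w := fun k => supersetSum m (u k) Z)
    (Function.ne_iff.2 ⟨j₀, hj₀⟩) fun j => ?_⟩
  calc x * supersetSum m (u j) Z
      = supersetSum m (fun S => ∑ k ∈ univ.erase j, disjointSum m (u k) S) Z := by
        rw [supersetSum, supersetSum, mul_sum]
        exact sum_congr rfl fun S hS => hsys j S (mem_powersetCard.1 (mem_filter.1 hS).1).2
    _ = ∑ k ∈ univ.erase j,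
          (Fintype.card α - m - #Z).choose (m - #Z) * disjointSum m (u k) Z := by
        rw [supersetSum, sum_comm]
        exact sum_congr rfl fun k _ => supersetSum_disjointSum hZm
    _ = _ := by
        rw [mul_sum]
        exact sum_congr rfl fun k _ => by rw [hdisj]; ring

end KneserSystem

lemma card_sub_one_mul_le_one_of_kneser_eigenvalue {N n m i : ℕ} (hN : 2 ≤ N) (hmn : N * m ≤ n)
    (hi : i ≤ m) {θ : ℝ} (hθ : θ ≠ N - 1)
    (h : θ * (n - m).choose m = (-1) ^ i * (n - m - i).choose (m - i) * (N - 1) ∨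
      θ * (n - m).choose m = -((-1) ^ i * (n - m - i).choose (m - i))) :
    (N - 1) * θ ≤ 1 := by
  have h2m : 2 * m ≤ N * m := Nat.mul_le_mul_right m hN
  have hN1 : (1 : ℝ) ≤ N - 1 := by
    have : (2 : ℝ) ≤ N := by exact_mod_cast hN
    linarith
  have hN0 : (0 : ℝ) ≤ N - 1 := by linarith
  have hD : (0 : ℝ) < (n - m).choose m := Nat.cast_pos.2 (Nat.choose_pos (by omega))
  have he : (0 : ℝ) ≤ (n - m - i).choose (m - i) := Nat.cast_nonneg _
  have hpow : ((N : ℝ) - 1) ^ i * (n - m - i).choose (m - i) ≤ (n - m).choose m := by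
    have hc : (N - 1) * (m - i + i) ≤ n - m - i + i := by
      rw [Nat.sub_add_cancel hi, Nat.sub_one_mul]; omega
    have := Nat.pow_mul_choose_le_choose_add hc
    rw [Nat.sub_add_cancel hi, Nat.sub_add_cancel (by omega)] at this
    have := (Nat.cast_le (α := ℝ)).2 this
    push_cast [Nat.cast_sub (by omega : 1 ≤ N)] at this
    exact this
  refine le_of_mul_le_mul_right ?_ hD
  rw [mul_assoc]
  rcases Nat.eq_zero_or_pos i with rfl | hi1
  · simp only [pow_zero, one_mul, Nat.sub_zero] at h
    rcases h with h | h
    · exact absurd (mul_right_cancel₀ hD.ne' (h.trans (mul_comm _ _))) hθ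
    · rw [h]; nlinarith
  rcases Nat.even_or_odd i with hev | hodd
  · have hle : ((N : ℝ) - 1) ^ 2 * (n - m - i).choose (m - i) ≤
        ((N : ℝ) - 1) ^ i * (n - m - i).choose (m - i) :=
      mul_le_mul_of_nonneg_right (pow_le_pow_right₀ hN1 (by obtain ⟨k, hk⟩ := hev; omega)) he
    rw [hev.neg_one_pow] at h
    rcases h with h | h <;> rw [h] <;> nlinarith [mul_nonneg (mul_nonneg he hN0) hN0]
  · have hle : ((N : ℝ) - 1) ^ 1 * (n - m - i).choose (m - i) ≤
        ((N : ℝ) - 1) ^ i * (n - m - i).choose (m - i) :=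
      mul_le_mul_of_nonneg_right (pow_le_pow_right₀ hN1 hi1) he
    rw [hodd.neg_one_pow] at h
    rcases h with h | h <;> rw [h] <;> nlinarith [mul_nonneg (mul_nonneg he hN0) hN0]

lemma sum_comp_div_card_eq_of_card_fiber_eq {γ β : Type*} [DecidableEq β] {s : Finset γ}
    {t : Finset β} {h : γ → β} (u : β → ℝ) (hs : s.Nonempty) (hst : Set.MapsTo h s t)
    (hfib : ∀ y ∈ t, ∀ y' ∈ t, #{x ∈ s | h x = y} = #{x ∈ s | h x = y'}) :
    (∑ x ∈ s, u (h x)) / #s = (∑ y ∈ t, u y) / #t := by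
  obtain ⟨x₀, hx₀⟩ := hs
  set c := #{x ∈ s | h x = h x₀}
  have hsum : ∑ x ∈ s, u (h x) = c * ∑ y ∈ t, u y := by
    rw [← sum_fiberwise_of_maps_to hst, mul_sum]
    refine sum_congr rfl fun y hy => ?_
    rw [sum_congr rfl fun x hx => congrArg u (mem_filter.1 hx).2, sum_const, nsmul_eq_mul,
      hfib y hy _ (hst hx₀)]
  have hcard : (#s : ℝ) = c * #t := by
    rw [card_eq_sum_card_fiberwise hst, Nat.cast_sum, sum_congr rfl fun y hy => by
      rw [hfib y hy _ (hst hx₀)], sum_const, nsmul_eq_mul, mul_comm]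
  have hc : (c : ℝ) ≠ 0 := Nat.cast_ne_zero.2 (card_ne_zero.2 ⟨x₀, mem_filter.2 ⟨hx₀, rfl⟩⟩)
  rw [hsum, hcard, mul_div_mul_left _ _ hc]

lemma exists_perm_fixing_image_eq {α : Type*} [DecidableEq α] {S T T' : Finset α}
    (hT : Disjoint S T) (hT' : Disjoint S T') (h : #T = #T') :
    ∃ π : Perm α, (∀ x ∈ S, π x = x) ∧ T.image π = T' := by
  let e := T.equivOfCardEq h
  obtain ⟨π, hπ⟩ := Perm.exists_extending_pair (Sum.elim (fun x : S => (x : α)) (fun x : T => x))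
    (Sum.elim (fun x : S => (x : α)) (fun x : T => (e x : α)))
    (Subtype.val_injective.sumElim Subtype.val_injective fun x y hxy =>
      disjoint_left.1 hT x.2 (hxy ▸ y.2))
    (Subtype.val_injective.sumElim (Subtype.val_injective.comp e.injective) fun x y hxy =>
      disjoint_left.1 hT' x.2 (hxy ▸ (e y).2))
  refine ⟨π, fun x hx => hπ (.inl ⟨x, hx⟩), eq_of_subset_of_card_le ?_ ?_⟩
  · rintro _ hy
    obtain ⟨x, hx, rfl⟩ := mem_image.1 hy
    exact hπ (.inr ⟨x, hx⟩) ▸ (e ⟨x, hx⟩).2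
  · rw [card_image_of_injective _ π.injective, h]

section CondAvg

variable {α : Type*} [Fintype α] [DecidableEq α]

def agreeOn (A : Finset α) (σ : Perm α) : Finset (Perm α) :=
  univ.filter fun η => ∀ p ∈ A, η p = σ p

lemma mem_agreeOn {A : Finset α} {σ η : Perm α} : η ∈ agreeOn A σ ↔ ∀ p ∈ A, η p = σ p := by
  simp [agreeOn]

lemma self_mem_agreeOn (A : Finset α) (σ : Perm α) : σ ∈ agreeOn A σ :=
  mem_agreeOn.2 fun _ _ => rfl

lemma agreeOn_congr {A : Finset α} {σ η : Perm α} (h : ∀ p ∈ A, η p = σ p) :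
    agreeOn A η = agreeOn A σ := by
  ext ζ
  simp only [mem_agreeOn]
  exact forall₂_congr fun p hp => by rw [h p hp]

/-- `condAvg A f σ` is `ν[f η | η = σ on A]` for the uniform measure `ν` on permutations. -/
noncomputable def condAvg (A : Finset α) : (Perm α → ℝ) →ₗ[ℝ] (Perm α → ℝ) where
  toFun f σ := (∑ η ∈ agreeOn A σ, f η) / #(agreeOn A σ)
  map_add' f g := by ext σ; simp [sum_add_distrib, add_div]
  map_smul' c f := by ext σ; simp [← mul_sum, mul_div_assoc]

variable {A : Finset α}

lemma condAvg_apply (f : Perm α → ℝ) (σ : Perm α) :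
    condAvg A f σ = (∑ η ∈ agreeOn A σ, f η) / #(agreeOn A σ) := rfl

lemma condAvg_congr (f : Perm α → ℝ) {σ η : Perm α} (h : ∀ p ∈ A, η p = σ p) :
    condAvg A f η = condAvg A f σ := by
  rw [condAvg_apply, condAvg_apply, agreeOn_congr h]

lemma condAvg_condAvg (f : Perm α → ℝ) : condAvg A (condAvg A f) = condAvg A f := by
  ext σ
  have hc : (#(agreeOn A σ) : ℝ) ≠ 0 :=
    Nat.cast_ne_zero.2 (card_ne_zero.2 ⟨σ, self_mem_agreeOn A σ⟩)
  rw [condAvg_apply, sum_congr rfl fun η hη => condAvg_congr f (mem_agreeOn.1 hη), sum_const,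
    nsmul_eq_mul, mul_div_cancel_left₀ _ hc]

lemma condAvg_mul_right {ρ : Perm α} (hρ : ∀ p, ρ p ∈ A ↔ p ∈ A) {g : Perm α → ℝ}
    (hg : ∀ η, g (η * ρ) = g η) (σ : Perm α) : condAvg A g (σ * ρ) = condAvg A g σ := by
  have hmem : ∀ η, η ∈ agreeOn A σ ↔ Equiv.mulRight ρ η ∈ agreeOn A (σ * ρ) := fun η => by
    simp only [mem_agreeOn, Equiv.coe_mulRight, Perm.mul_apply]
    refine ⟨fun h p hp => h _ ((hρ p).2 hp), fun h p hp => ?_⟩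
    simpa using h (ρ⁻¹ p) ((hρ _).1 (by simpa using hp))
  rw [condAvg_apply, condAvg_apply, card_equiv _ hmem,
    sum_equiv _ hmem fun η _ => (hg η).symm]

lemma condAvg_eq_of_image_eq {B : Finset α} (hAB : Disjoint A B) {g : Perm α → ℝ}
    (hg : ∀ σ η : Perm α, (∀ p ∈ B, η p = σ p) → g η = g σ) {σ σ' : Perm α}
    (h : A.image σ = A.image σ') : condAvg A g σ = condAvg A g σ' := by
  have hA : ∀ p, (σ⁻¹ * σ') p ∈ A ↔ p ∈ A := fun p => by
    rw [← σ.injective.mem_finset_image, h, Perm.mul_apply, Perm.coe_inv, Equiv.apply_symm_apply,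
      σ'.injective.mem_finset_image]
  -- `ρ` permutes `A`, fixes `B`, and `σ * ρ` agrees with `σ'` on `A`.
  set ρ := Perm.ofSubtype ((σ⁻¹ * σ').subtypePerm hA)
  have hρA : ∀ p ∈ A, ρ p = (σ⁻¹ * σ') p := fun p hp => Perm.ofSubtype_apply_of_mem _ hp
  have hρ : ∀ p ∉ A, ρ p = p := fun p hp => Perm.ofSubtype_apply_of_not_mem _ hp
  have hρmem : ∀ p, ρ p ∈ A ↔ p ∈ A := fun p => by
    by_cases hp : p ∈ A
    · rw [hρA p hp]; exact hA p
    · rw [hρ p hp]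
  calc condAvg A g σ = condAvg A g (σ * ρ) :=
        (condAvg_mul_right hρmem (fun η => hg _ _ fun p hp => by
          rw [Perm.mul_apply, hρ p (disjoint_right.1 hAB hp)]) σ).symm
    _ = condAvg A g σ' := condAvg_congr g fun p hp => by simp [hρA p hp]

lemma condAvg_image_comp {B : Finset α} (hAB : Disjoint A B) (u : Finset α → ℝ) (σ : Perm α) :
    condAvg A (fun η => u (B.image η)) σ =
      disjointSum #B u (A.image σ) / (Fintype.card α - #A).choose #B := by
  have hmaps : Set.MapsTo (fun η : Perm α => B.image η) (agreeOn A σ)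
      (powersetCard #B (A.image σ)ᶜ) := by
    intro η hη
    rw [mem_coe, mem_agreeOn] at hη
    rw [mem_coe, mem_powersetCard, card_image_of_injective _ η.injective]
    refine ⟨fun y hy => ?_, rfl⟩
    obtain ⟨p, hp, rfl⟩ := mem_image.1 hy
    rw [mem_compl]
    intro hσ
    obtain ⟨q, hq, hqp⟩ := mem_image.1 hσ
    exact disjoint_left.1 hAB hq (η.injective ((hη q hq).trans hqp) ▸ hp)
  have hle : ∀ T ∈ powersetCard #B (A.image σ)ᶜ, ∀ T' ∈ powersetCard #B (A.image σ)ᶜ,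
      #((agreeOn A σ).filter fun η : Perm α => B.image η = T) ≤
        #((agreeOn A σ).filter fun η : Perm α => B.image η = T') := by
    intro T hT T' hT'
    rw [mem_powersetCard, subset_compl_iff_disjoint_right] at hT hT'
    -- Left multiplication by `π` fixes `σ(A)` pointwise and carries the fibre over `T` to `T'`.
    obtain ⟨π, hπσ, hπT⟩ :=
      exists_perm_fixing_image_eq hT.1.symm hT'.1.symm (hT.2.trans hT'.2.symm)
    refine card_le_card_of_injOn (π * ·) (fun η hη => ?_) fun η _ ζ _ h => mul_left_cancel h
    rw [mem_coe, mem_filter, mem_agreeOn] at hη ⊢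
    refine ⟨fun p hp => ?_, ?_⟩
    · rw [Perm.mul_apply, hη.1 p hp]
      exact hπσ _ (mem_image_of_mem σ hp)
    · rw [Perm.coe_mul, ← image_image, hη.2, hπT]
  rw [condAvg_apply, sum_comp_div_card_eq_of_card_fiber_eq u ⟨σ, self_mem_agreeOn A σ⟩ hmaps
    fun T hT T' hT' => (hle T hT T' hT').antisymm (hle T' hT' T hT), card_powersetCard,
    card_compl, card_image_of_injective _ σ.injective]
  rfl

end CondAvg

lemma card_mul_le_card_of_pairwise_disjoint {α ι : Type*} [Fintype α] [DecidableEq α]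
    [Fintype ι] {m : ℕ} {B : ι → Finset α} (hB : ∀ k, #(B k) = m)
    (hdisj : Pairwise fun i j => Disjoint (B i) (B j)) : Fintype.card ι * m ≤ Fintype.card α :=
  calc Fintype.card ι * m = #(univ.biUnion B) := by
        rw [card_biUnion (hdisj.set_pairwise _), sum_congr rfl fun k _ => hB k, sum_const,
          card_univ, smul_eq_mul]
    _ ≤ Fintype.card α := card_le_univ _

lemma mul_condAvg_eq_sum_erase {α ι : Type*} [Fintype α] [DecidableEq α] [Fintype ι]
    [DecidableEq ι] {B : ι → Finset α} {f : Perm α → ℝ} {θ : ℝ}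
    (heig : ∑ k, condAvg (B k) f = (θ + 1) • f) (j : ι) (σ : Perm α) :
    θ * condAvg (B j) f σ = ∑ k ∈ univ.erase j, condAvg (B j) (condAvg (B k) f) σ := by
  have h := congr_fun (congrArg (condAvg (B j)) heig) σ
  rw [map_sum, map_smul, ← add_sum_erase _ _ (mem_univ j), condAvg_condAvg] at h
  simp only [Pi.add_apply, Finset.sum_apply, Pi.smul_apply, smul_eq_mul] at h
  linarith

theorem card_sub_one_mul_le_one_of_sum_condAvg_eq {α ι : Type*} [Fintype α] [DecidableEq α]
    [Fintype ι] [DecidableEq ι] {m : ℕ} {B : ι → Finset α} (hB : ∀ k, #(B k) = m)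
    (hdisj : Pairwise fun i j => Disjoint (B i) (B j)) (hN : 2 ≤ Fintype.card ι)
    {f : Perm α → ℝ} (hf : f ≠ 0) {θ : ℝ} (hθ : θ ≠ Fintype.card ι - 1)
    (heig : ∑ k, condAvg (B k) f = (θ + 1) • f) :
    (Fintype.card ι - 1) * θ ≤ 1 := by
  have hN1 : (1 : ℝ) ≤ Fintype.card ι - 1 := by
    have : (2 : ℝ) ≤ Fintype.card ι := by exact_mod_cast hN
    linarith
  rcases le_or_gt θ 0 with hθ0 | hθ0
  · nlinarith
  have hproj := mul_condAvg_eq_sum_erase heig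
  have hfac : ∀ j, Function.FactorsThrough (condAvg (B j) f) fun σ : Perm α => (B j).image σ :=
    fun j σ σ' h => mul_left_cancel₀ hθ0.ne' <| by
      rw [hproj, hproj]
      exact sum_congr rfl fun k hk => condAvg_eq_of_image_eq (hdisj (ne_of_mem_erase hk).symm)
        (fun _ _ => condAvg_congr _) h
  let u : ι → Finset α → ℝ := fun j =>
    Function.extend (fun σ : Perm α => (B j).image σ) (condAvg (B j) f) 0
  have hu : ∀ j (σ : Perm α), u j ((B j).image σ) = condAvg (B j) f σ :=
    fun j => (hfac j).extend_apply 0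
  have hcard := card_mul_le_card_of_pairwise_disjoint hB hdisj
  have hD : ((Fintype.card α - m).choose m : ℝ) ≠ 0 :=
    Nat.cast_ne_zero.2 (Nat.choose_pos (by have := Nat.mul_le_mul_right m hN; omega)).ne'
  have hsys : ∀ j S, #S = m → θ * (Fintype.card α - m).choose m * u j S =
      ∑ k ∈ univ.erase j, disjointSum m (u k) S := by
    intro j S hS
    obtain ⟨σ, rfl⟩ := Perm.exists_map_finset_eq (B j) S (by rw [hB, hS])
    rw [map_eq_image, mul_right_comm, Equiv.coe_toEmbedding, hu, hproj, sum_mul]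
    refine sum_congr rfl fun k hk => ?_
    rw [show condAvg (B k) f = fun η : Perm α => u k ((B k).image η) from
        funext fun η => (hu k η).symm, condAvg_image_comp (hdisj (ne_of_mem_erase hk).symm), hB,
      hB, div_mul_cancel₀ _ hD]
  have hu0 : ∃ j S, #S = m ∧ u j S ≠ 0 := by
    by_contra! h0
    refine hf (funext fun σ => ?_)
    have h := congr_fun heig σ
    simp only [Finset.sum_apply, Pi.smul_apply, smul_eq_mul] at h
    rw [sum_eq_zero fun k _ => by
      rw [← hu k σ]; exact h0 k _ (by rw [card_image_of_injective _ σ.injective, hB])] at h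
    exact (mul_eq_zero.1 h.symm).resolve_left (by linarith)
  obtain ⟨i, hi, h⟩ := exists_eigenvalue_of_kneser_system hsys hu0
  exact card_sub_one_mul_le_one_of_kneser_eigenvalue hN hcard hi hθ h

section Blocks

variable {n m : ℕ}

def blockSet (n m a : ℕ) (h : a + m ≤ n) : Finset (Fin n) :=
  (Ico a (a + m)).attachFin fun p hp => by rw [mem_Ico] at hp; omega

lemma mem_blockSet {a : ℕ} {h : a + m ≤ n} {p : Fin n} :
    p ∈ blockSet n m a h ↔ a ≤ p ∧ (p : ℕ) < a + m := by
  rw [blockSet, mem_attachFin, mem_Ico]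

lemma card_blockSet (a : ℕ) (h : a + m ≤ n) : #(blockSet n m a h) = m := by
  rw [blockSet, card_attachFin, Nat.card_Ico, Nat.add_sub_cancel_left]

lemma blockFix_eq_agreeOn (a : ℕ) (h : a + m ≤ n) (σ : Perm (Fin n)) :
    blockFix n m a h σ = agreeOn (blockSet n m a h) σ := by
  ext η
  simp only [blockFix, mem_filter, mem_univ, true_and, mem_agreeOn, mem_blockSet]
  refine ⟨fun hη p hp => ?_, fun hη t => hη _ ⟨by simp, by simp⟩⟩
  simpa only [Nat.add_sub_cancel' hp.1] using hη ⟨(p : ℕ) - a, by omega⟩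

lemma Pop_apply {N : ℕ} (a : Fin N → ℕ) (ha : ∀ k, a k + m ≤ n) (f : Perm (Fin n) → ℝ)
    (σ : Perm (Fin n)) :
    Pop n m N a ha f σ = (∑ k, condAvg (blockSet n m (a k) (ha k)) f σ) / N := by
  simp only [Pop, blockFix_eq_agreeOn, condAvg_apply]
  ring

lemma pairwise_disjoint_blockSet {N : ℕ} {a : Fin N → ℕ} (ha : ∀ k, a k + m ≤ n)
    (hdisj : ∀ k k' : Fin N, k ≠ k' → ∀ t t' : ℕ, t < m → t' < m → a k + t ≠ a k' + t') :
    Pairwise fun k k' => Disjoint (blockSet n m (a k) (ha k)) (blockSet n m (a k') (ha k')) :=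
  fun k k' hkk' => disjoint_left.2 fun p hp hp' => by
    rw [mem_blockSet] at hp hp'
    exact hdisj k k' hkk' (p - a k) (p - a k') (by omega) (by omega) (by omega)

end Blocks

theorem one_sub_Pop_gap_general (n m N : ℕ) (hN : 2 ≤ N)
    (a : Fin N → ℕ) (ha : ∀ k, a k + m ≤ n)
    (hdisj : ∀ k k' : Fin N, k ≠ k' → ∀ t t' : ℕ, t < m → t' < m → a k + t ≠ a k' + t')
    (lam : ℝ) (hlam : lam ≠ 0) (f : Equiv.Perm (Fin n) → ℝ) (hf : f ≠ 0)
    (heig : ∀ σ, f σ - Pop n m N a ha f σ = lam * f σ) :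
    (N - 2 : ℝ) / (N - 1 : ℝ) ≤ lam := by
  have hN' : (2 : ℝ) ≤ N := by exact_mod_cast hN
  have hsum : ∑ k, condAvg (blockSet n m (a k) (ha k)) f = (N * (1 - lam) - 1 + 1) • f := by
    ext σ
    have h := heig σ
    rw [Pop_apply, sub_eq_iff_eq_add, ← sub_eq_iff_eq_add', eq_div_iff (by positivity)] at h
    simp only [Finset.sum_apply, Pi.smul_apply, smul_eq_mul, ← h]
    ring
  have hθ : (N * (1 - lam) - 1 : ℝ) ≠ Fintype.card (Fin N) - 1 := fun h => by
    rw [Fintype.card_fin] at h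
    exact hlam ((mul_eq_zero.1 (by linarith : (N : ℝ) * lam = 0)).resolve_left (by positivity))
  have hgap := card_sub_one_mul_le_one_of_sum_condAvg_eq (card_blockSet _ <| ha ·)
    (pairwise_disjoint_blockSet ha hdisj) (by simpa using hN) hf hθ hsum
  rw [Fintype.card_fin] at hgap
  rw [div_le_iff₀ (by linarith)]
  nlinarith

/-- for `N ≥ 2`, `m ≥ 1`, `N·m ≤ n` and `N` pairwise disjoint `m`-blocks,
every nonzero eigenvalue of `1 − P` is at least `(N−2)/(N−1)`; that is, the lowest
nonzero eigenvalue `μ` of `1 − P` satisfies `μ ≥ (N−2)/(N−1)`. -/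
theorem one_sub_Pop_gap (n m N : ℕ) (hN : 2 ≤ N) (hm : 1 ≤ m) (hmn : N * m ≤ n)
    (a : Fin N → ℕ) (ha : ∀ k, a k + m ≤ n)
    (hdisj : ∀ k k' : Fin N, k ≠ k' → ∀ t t' : ℕ, t < m → t' < m → a k + t ≠ a k' + t')
    (lam : ℝ) (hlam : lam ≠ 0) (f : Equiv.Perm (Fin n) → ℝ) (hf : f ≠ 0)
    (heig : ∀ σ, f σ - Pop n m N a ha f σ = lam * f σ) :
    (N - 2 : ℝ) / (N - 1 : ℝ) ≤ lam :=
  one_sub_Pop_gap_general n m N hN a ha hdisj lam hlam f hf heig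
end

section
/- Let n = N·ℓ with N ≥ 2, and let f be the indicator of the event that letter 1 is in the first ℓ-block I_1. Then Var(f) = (N−1)/N^2, and for every j ≠ 1, ν[(A_{1,j}f)^2] = 1/(2N), so that the block-average Dirichlet form satisfies D(f,f) = Var(f). -/
open Finset

noncomputable def pexp (n : ℕ) (f : Equiv.Perm (Fin n) → ℝ) : ℝ :=
  (∑ η : Equiv.Perm (Fin n), f η) / (Nat.factorial n : ℝ)

noncomputable def pvar (n : ℕ) (f : Equiv.Perm (Fin n) → ℝ) : ℝ :=
  pexp n (fun η => (f η) ^ 2) - (pexp n f) ^ 2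

def outFix (N ℓ : ℕ) (i j : Fin N) (σ : Equiv.Perm (Fin (N * ℓ))) :
    Finset (Equiv.Perm (Fin (N * ℓ))) :=
  (univ : Finset (Equiv.Perm (Fin (N * ℓ)))).filter (fun η =>
    ∀ x : Fin (N * ℓ), x.val / ℓ ≠ i.val → x.val / ℓ ≠ j.val → η x = σ x)

noncomputable def Aavg (N ℓ : ℕ) (i j : Fin N) (f : Equiv.Perm (Fin (N * ℓ)) → ℝ)
    (σ : Equiv.Perm (Fin (N * ℓ))) : ℝ :=
  if i = j then 0
  else (∑ η ∈ outFix N ℓ i j σ, f η) / ((outFix N ℓ i j σ).card : ℝ) - f σ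

noncomputable def Dform (N ℓ : ℕ) (f : Equiv.Perm (Fin (N * ℓ)) → ℝ) : ℝ :=
  (1 / N) * ∑ i : Fin N, ∑ j : Fin N, pexp (N * ℓ) (fun σ => (Aavg N ℓ i j f σ) ^ 2)

open Classical in
/-- Indicator of the event that letter `0` (playing the role of "letter 1") lies in the
first `ℓ`-block `I_1 = {0, …, ℓ−1}`. -/
noncomputable def indFirstBlock (N ℓ : ℕ) (σ : Equiv.Perm (Fin (N * ℓ))) : ℝ :=
  if ∃ x : Fin (N * ℓ), x.val < ℓ ∧ (σ x).val = 0 then 1 else 0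

/-!
The test function depends only on the position `p = σ⁻¹(z)` of the tracked letter, and `p` is
uniform under `ν`; this gives `ν[f] = ν[f²] = 1/N`. Conditioning on the configuration outside
`I_i ∪ I_j` does not move `p` when it lies outside these blocks, so `A_{i,j} f = 0` unless
`p ∈ I_i ∪ I_j` and exactly one of `i, j` is the block of `f`. In that case right multiplication
by the permutation exchanging the blocks `I_i` and `I_j` is an involution of the conditioning
class that exchanges `{f = 1}` and `{f = 0}`, so the conditional mean is `1/2` and
`(A_{i,j} f)² = 1/4`. Hence `ν[(A_{i,j} f)²] = 1/(2N)` for each of the `2(N - 1)` such ordered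
pairs, and `D(f, f) = (N - 1)/N²`.
-/

namespace Equiv.Perm

variable {α : Type*} [Fintype α] [DecidableEq α]

theorem card_mul_sum_apply (g : α → ℝ) (z : α) :
    Fintype.card α * ∑ σ : Perm α, g (σ z) = (Fintype.card α).factorial * ∑ x, g x := by
  have hindep : ∀ w, ∑ σ : Perm α, g (σ z) = ∑ σ : Perm α, g (σ w) := fun w => by
    rw [← Equiv.sum_comp (Equiv.mulRight (swap z w))]
    simp only [coe_mulRight, mul_apply, swap_apply_left]
  calc (Fintype.card α : ℝ) * ∑ σ : Perm α, g (σ z)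
      = ∑ w : α, ∑ σ : Perm α, g (σ w) := by simp [← hindep]
    _ = ∑ σ : Perm α, ∑ x, g x := by
      rw [sum_comm]
      exact sum_congr rfl fun σ _ => Equiv.sum_comp σ g
    _ = _ := by simp [Fintype.card_perm]

end Equiv.Perm

theorem pexp_comp_symm_apply {n : ℕ} (hn : 0 < n) (g : Fin n → ℝ) (z : Fin n) :
    pexp n (fun σ => g (σ.symm z)) = (∑ x, g x) / n := by
  have h := Equiv.Perm.card_mul_sum_apply g z
  rw [Fintype.card_fin] at h
  rw [pexp, ← Equiv.sum_comp (Equiv.inv (Equiv.Perm (Fin n)))]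
  simp only [Equiv.inv_apply, Equiv.Perm.inv_def, Equiv.symm_symm]
  have hfact : (n.factorial : ℝ) ≠ 0 := by positivity
  have hn' : (n : ℝ) ≠ 0 := by positivity
  field_simp
  linarith

theorem Fin.divNat_finProdFinEquiv {N ℓ : ℕ} (p : Fin N × Fin ℓ) :
    (finProdFinEquiv p).divNat = p.1 := by
  have h := congrArg Prod.fst (finProdFinEquiv.symm_apply_apply p)
  rwa [finProdFinEquiv_symm_apply] at h

theorem Fin.sum_comp_divNat {N ℓ : ℕ} {M : Type*} [AddCommMonoid M] (g : Fin N → M) :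
    ∑ x : Fin (N * ℓ), g x.divNat = ℓ • ∑ k, g k := by
  rw [← Equiv.sum_comp finProdFinEquiv, Fintype.sum_prod_type, Finset.smul_sum]
  simp [Fin.divNat_finProdFinEquiv]

theorem Fintype.sum_ite_eq_or_eq {ι : Type*} [Fintype ι] [DecidableEq ι] {i j : ι} (hij : i ≠ j)
    (c : ℝ) : ∑ m : ι, (if m = i ∨ m = j then c else 0) = 2 * c := by
  rw [Finset.sum_ite, Finset.sum_const_zero, add_zero, Finset.sum_const, Finset.filter_or,
    Finset.card_union_of_disjoint (by simpa [Finset.disjoint_left] using hij)]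
  simp [Finset.filter_eq']

theorem Fintype.sum_sum_ite_ne_and_or_eq {ι : Type*} [Fintype ι] [DecidableEq ι] (k : ι)
    (c : ℝ) : ∑ i : ι, ∑ j : ι, (if i ≠ j ∧ (i = k ∨ j = k) then c else 0) =
      2 * ((Fintype.card ι : ℝ) - 1) * c := by
  have hrow_k : ∑ j : ι, (if k ≠ j ∧ (k = k ∨ j = k) then c else 0) =
      ((Fintype.card ι - 1 : ℕ) : ℝ) * c := by
    simp [Finset.sum_ite, Finset.filter_ne, Finset.card_erase_of_mem]
  have hrow : ∀ i ∈ univ.erase k, ∑ j : ι, (if i ≠ j ∧ (i = k ∨ j = k) then c else 0) = c := by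
    intro i hi
    rw [Finset.sum_eq_single k] <;> simp_all [eq_comm]
  rw [← Finset.sum_erase_add _ _ (mem_univ k), Finset.sum_congr rfl hrow, hrow_k, sum_const,
    card_erase_of_mem (mem_univ k), nsmul_eq_mul, card_univ,
    Nat.cast_pred (Fintype.card_pos_iff.2 ⟨k⟩)]
  ring

open Equiv

section

variable {N ℓ : ℕ}

def blockSwap (i j : Fin N) : Perm (Fin (N * ℓ)) :=
  finProdFinEquiv.permCongr ((swap i j).prodCongr (Equiv.refl (Fin ℓ)))

theorem divNat_blockSwap (i j : Fin N) (x : Fin (N * ℓ)) :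
    (blockSwap i j x).divNat = swap i j x.divNat := by
  simp [blockSwap, permCongr_apply, Fin.divNat_finProdFinEquiv, finProdFinEquiv_symm_apply]

theorem blockSwap_mul_self (i j : Fin N) : blockSwap (ℓ := ℓ) i j * blockSwap i j = 1 := by
  rw [blockSwap, ← permCongrHom_coe, ← map_mul, ← map_one finProdFinEquiv.permCongrHom]
  congr 1
  ext ⟨a, b⟩ <;> simp

theorem blockSwap_apply_of_ne {i j : Fin N} {x : Fin (N * ℓ)} (hi : x.divNat ≠ i)
    (hj : x.divNat ≠ j) : blockSwap i j x = x := by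
  simp only [blockSwap, permCongr_apply, prodCongr_apply, coe_refl, Prod.map_apply,
    finProdFinEquiv_symm_apply, swap_apply_of_ne_of_ne hi hj, id_eq]
  rw [← finProdFinEquiv_symm_apply, apply_symm_apply]

theorem mem_outFix_iff {i j : Fin N} {σ η : Perm (Fin (N * ℓ))} :
    η ∈ outFix N ℓ i j σ ↔ ∀ x : Fin (N * ℓ), x.divNat ≠ i → x.divNat ≠ j → η x = σ x := by
  simp [outFix, Fin.ext_iff, Fin.coe_divNat]

theorem mem_outFix_self (i j : Fin N) (σ : Perm (Fin (N * ℓ))) : σ ∈ outFix N ℓ i j σ :=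
  mem_outFix_iff.2 fun _ _ _ => rfl

theorem mem_outFix_comm {i j : Fin N} {σ η : Perm (Fin (N * ℓ))} :
    η ∈ outFix N ℓ i j σ ↔ σ ∈ outFix N ℓ i j η := by
  simp only [mem_outFix_iff, eq_comm]

theorem mul_blockSwap_mem_outFix {i j : Fin N} {σ η : Perm (Fin (N * ℓ))}
    (hη : η ∈ outFix N ℓ i j σ) : η * blockSwap i j ∈ outFix N ℓ i j σ :=
  mem_outFix_iff.2 fun x hi hj => by
    rw [Perm.mul_apply, blockSwap_apply_of_ne hi hj]
    exact mem_outFix_iff.1 hη x hi hj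

theorem symm_apply_eq_of_mem_outFix {i j : Fin N} {σ η : Perm (Fin (N * ℓ))}
    (hη : η ∈ outFix N ℓ i j σ) {z : Fin (N * ℓ)} (hi : (σ.symm z).divNat ≠ i)
    (hj : (σ.symm z).divNat ≠ j) : η.symm z = σ.symm z := by
  rw [symm_apply_eq, mem_outFix_iff.1 hη _ hi hj, apply_symm_apply]

theorem divNat_symm_apply_of_mem_outFix {i j : Fin N} {σ η : Perm (Fin (N * ℓ))}
    (hη : η ∈ outFix N ℓ i j σ) {z : Fin (N * ℓ)}
    (hz : (σ.symm z).divNat = i ∨ (σ.symm z).divNat = j) :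
    (η.symm z).divNat = i ∨ (η.symm z).divNat = j := by
  by_contra! h
  rw [symm_apply_eq_of_mem_outFix (mem_outFix_comm.1 hη) h.1 h.2] at hz
  tauto

theorem Aavg_eq_zero_of_forall_mem_outFix {i j : Fin N} {f : Perm (Fin (N * ℓ)) → ℝ}
    {σ : Perm (Fin (N * ℓ))} (h : ∀ η ∈ outFix N ℓ i j σ, f η = f σ) :
    Aavg N ℓ i j f σ = 0 := by
  have hcard : ((outFix N ℓ i j σ).card : ℝ) ≠ 0 := by
    exact_mod_cast (card_pos.2 ⟨σ, mem_outFix_self i j σ⟩).ne'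
  rw [Aavg, sum_congr rfl h, sum_const, nsmul_eq_mul, mul_div_cancel_left₀ _ hcard]
  simp

theorem Aavg_eq_half_sub {i j : Fin N} (hij : i ≠ j) {f : Perm (Fin (N * ℓ)) → ℝ}
    {σ : Perm (Fin (N * ℓ))}
    (h : ∀ η ∈ outFix N ℓ i j σ, f η + f (η * blockSwap i j) = 1) :
    Aavg N ℓ i j f σ = 1 / 2 - f σ := by
  rw [Aavg, if_neg hij]
  set s := outFix N ℓ i j σ
  have hcard : (s.card : ℝ) ≠ 0 := by
    exact_mod_cast (card_pos.2 ⟨σ, mem_outFix_self i j σ⟩).ne'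
  have hinvol : ∀ η : Perm (Fin (N * ℓ)), η * blockSwap i j * blockSwap i j = η := fun η => by
    rw [mul_assoc, blockSwap_mul_self, mul_one]
  have hswap : ∑ η ∈ s, f (η * blockSwap i j) = ∑ η ∈ s, f η :=
    sum_nbij' (· * blockSwap i j) (· * blockSwap i j) (fun _ => mul_blockSwap_mem_outFix)
      (fun _ => mul_blockSwap_mem_outFix) (fun η _ => hinvol η) (fun η _ => hinvol η)
      (fun _ _ => rfl)
  have hsum : 2 * ∑ η ∈ s, f η = s.card := by
    rw [two_mul]
    nth_rw 2 [← hswap]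
    rw [← sum_add_distrib, sum_congr rfl h, sum_const, nsmul_one]
  field_simp
  linarith

def blockIndicator (z : Fin (N * ℓ)) (k : Fin N) (σ : Perm (Fin (N * ℓ))) : ℝ :=
  if (σ.symm z).divNat = k then 1 else 0

theorem indFirstBlock_eq_blockIndicator (hN : 0 < N) (hℓ : 0 < ℓ) :
    indFirstBlock N ℓ = blockIndicator ⟨0, Nat.mul_pos hN hℓ⟩ ⟨0, hN⟩ := by
  ext σ
  refine if_congr ?_ rfl rfl
  rw [Fin.ext_iff, Fin.coe_divNat, Nat.div_eq_zero_iff_lt hℓ]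
  constructor
  · rintro ⟨x, hx, hσx⟩
    rwa [σ.symm_apply_eq.2 (Fin.ext hσx).symm]
  · exact fun h => ⟨_, h, by simp⟩

theorem pexp_comp_symm_apply_divNat (g : Fin N → ℝ) (z : Fin (N * ℓ)) :
    pexp (N * ℓ) (fun σ => g (σ.symm z).divNat) = (∑ k, g k) / N := by
  obtain ⟨hN, hℓ⟩ := CanonicallyOrderedAdd.mul_pos.1 z.pos
  rw [pexp_comp_symm_apply z.pos (fun x => g x.divNat), Fin.sum_comp_divNat, nsmul_eq_mul]
  push_cast
  field_simp

theorem pexp_blockIndicator (z : Fin (N * ℓ)) (k : Fin N) :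
    pexp (N * ℓ) (blockIndicator z k) = 1 / N := by
  unfold blockIndicator
  simpa using pexp_comp_symm_apply_divNat (fun m => if m = k then (1 : ℝ) else 0) z

theorem pvar_blockIndicator (z : Fin (N * ℓ)) (k : Fin N) :
    pvar (N * ℓ) (blockIndicator z k) = ((N : ℝ) - 1) / (N : ℝ) ^ 2 := by
  have hsq : (fun σ => blockIndicator z k σ ^ 2) = blockIndicator z k := by
    ext σ; unfold blockIndicator; split_ifs <;> norm_num
  have hN : (N : ℝ) ≠ 0 := by have := k.pos; positivity
  rw [pvar, hsq, pexp_blockIndicator]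
  field_simp

theorem Aavg_blockIndicator_of_ne {i j k : Fin N} (hi : i ≠ k) (hj : j ≠ k) (z : Fin (N * ℓ))
    (σ : Perm (Fin (N * ℓ))) : Aavg N ℓ i j (blockIndicator z k) σ = 0 := by
  refine Aavg_eq_zero_of_forall_mem_outFix fun η hη => ?_
  by_cases hz : (σ.symm z).divNat = i ∨ (σ.symm z).divNat = j
  · have hηz := divNat_symm_apply_of_mem_outFix hη hz
    have hσk : (σ.symm z).divNat ≠ k := by rintro h; rw [h] at hz; tauto
    have hηk : (η.symm z).divNat ≠ k := by rintro h; rw [h] at hηz; tauto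
    simp [blockIndicator, hσk, hηk]
  · obtain ⟨hzi, hzj⟩ := not_or.1 hz
    simp [blockIndicator, symm_apply_eq_of_mem_outFix hη hzi hzj]

theorem Aavg_blockIndicator_sq {i j k : Fin N} (hij : i ≠ j) (hk : i = k ∨ j = k)
    (z : Fin (N * ℓ)) (σ : Perm (Fin (N * ℓ))) :
    Aavg N ℓ i j (blockIndicator z k) σ ^ 2 =
      if (σ.symm z).divNat = i ∨ (σ.symm z).divNat = j then 1 / 4 else 0 := by
  split_ifs with hz
  · have hpair : ∀ η ∈ outFix N ℓ i j σ,
        blockIndicator z k η + blockIndicator z k (η * blockSwap i j) = 1 := by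
      intro η hη
      have hηz := divNat_symm_apply_of_mem_outFix hη hz
      have hswap : (η * blockSwap i j).symm z = blockSwap i j (η.symm z) := by
        rw [symm_apply_eq, Perm.mul_apply, ← Perm.mul_apply (blockSwap i j), blockSwap_mul_self,
          Perm.one_apply, apply_symm_apply]
      simp only [blockIndicator, hswap, divNat_blockSwap]
      rcases hηz with h | h <;> rcases hk with rfl | rfl <;> simp [h, hij, hij.symm]
    rw [Aavg_eq_half_sub hij hpair]
    unfold blockIndicator
    split_ifs <;> norm_num
  · obtain ⟨hzi, hzj⟩ := not_or.1 hz
    rw [Aavg_eq_zero_of_forall_mem_outFix fun η hη => ?_]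
    · norm_num
    simp [blockIndicator, symm_apply_eq_of_mem_outFix hη hzi hzj]

theorem pexp_Aavg_blockIndicator_sq (i j k : Fin N) (z : Fin (N * ℓ)) :
    pexp (N * ℓ) (fun σ => Aavg N ℓ i j (blockIndicator z k) σ ^ 2) =
      if i ≠ j ∧ (i = k ∨ j = k) then 1 / (2 * (N : ℝ)) else 0 := by
  split_ifs with h
  · simp only [Aavg_blockIndicator_sq h.1 h.2 z]
    rw [pexp_comp_symm_apply_divNat (fun m => if m = i ∨ m = j then (1 / 4 : ℝ) else 0) z,
      Fintype.sum_ite_eq_or_eq h.1]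
    ring
  · have hA : ∀ σ, Aavg N ℓ i j (blockIndicator z k) σ = 0 := fun σ => by
      by_cases hij : i = j
      · simp [Aavg, hij]
      · have hk : i ≠ k ∧ j ≠ k := by tauto
        exact Aavg_blockIndicator_of_ne hk.1 hk.2 z σ
    simp [pexp, hA]

theorem Dform_blockIndicator (z : Fin (N * ℓ)) (k : Fin N) :
    Dform N ℓ (blockIndicator z k) = ((N : ℝ) - 1) / (N : ℝ) ^ 2 := by
  have hN : (N : ℝ) ≠ 0 := by have := k.pos; positivity
  simp only [Dform, pexp_Aavg_blockIndicator_sq, Fintype.sum_sum_ite_ne_and_or_eq,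
    Fintype.card_fin]
  field_simp

end

/-- for `f` the indicator that letter 1 is in the first `ℓ`-block,
`Var(f) = (N−1)/N²`, for every `j ≠ 1` one has `ν[(A_{1,j} f)²] = 1/(2N)`, and
`D(f,f) = Var(f)`. -/
theorem blockAverage_testFunction (N ℓ : ℕ) (hN : 2 ≤ N) (hℓ : 1 ≤ ℓ) :
    pvar (N * ℓ) (indFirstBlock N ℓ) = ((N : ℝ) - 1) / (N : ℝ) ^ 2 ∧
    (∀ j : Fin N, j ≠ ⟨0, by omega⟩ →
      pexp (N * ℓ) (fun σ => (Aavg N ℓ ⟨0, by omega⟩ j (indFirstBlock N ℓ) σ) ^ 2) =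
        1 / (2 * (N : ℝ))) ∧
    Dform N ℓ (indFirstBlock N ℓ) = pvar (N * ℓ) (indFirstBlock N ℓ) := by
  rw [indFirstBlock_eq_blockIndicator (by omega) hℓ, pvar_blockIndicator,
    Dform_blockIndicator]
  refine ⟨rfl, fun j hj => ?_, rfl⟩
  rw [pexp_Aavg_blockIndicator_sq, if_pos ⟨hj.symm, Or.inl rfl⟩]
end

section
/- Let N ≥ 2 and let ν be a probability measure on a finite set Ω invariant under transformations T_{i,i+1} (1 ≤ i ≤ N−1) exchanging adjacent blocks. For all functions f and all 1 ≤ i < j ≤ N, ν[(f∘T_{i,j} − f)^2] ≤ 4N Σ_{i'=1}^{N−1} ν[(f∘T_{i',i'+1} − f)^2], where T_{i,j} is the composition of nearest-neighbor exchanges moving block i to position j and back. -/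
/-!
Write `T_{i,j}` as the word of `2(j - i) - 1` adjacent exchanges it is defined by and telescope
`f ∘ T_{i,j} - f` along the word. Cauchy–Schwarz bounds the square of the telescoping sum by the
length of the word times the sum of the squared increments. Since `ν` is invariant under every
letter, it is invariant under every prefix of the word, so the `k`-th increment has the same
`ν`-energy as `f ∘ T_{a,a+1} - f` for the `k`-th letter `a`. Each letter occurs at most twice and
the word has length less than `2N`, which gives the factor `4N`.
-/

open Finset

theorem sq_sub_le_mul_sum_sq_sub {R : Type*} [CommRing R] [LinearOrder R] [IsStrictOrderedRing R]
    (x : ℕ → R) (n : ℕ) :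
    (x n - x 0) ^ 2 ≤ n * ∑ k ∈ range n, (x (k + 1) - x k) ^ 2 := by
  rw [← sum_range_sub]
  simpa using sq_sum_le_card_mul_sum_sq (s := range n) (f := fun k => x (k + 1) - x k)

theorem List.sum_map_le_mul_sum_of_count_le {ι R : Type*} [DecidableEq ι] [Semiring R]
    [PartialOrder R] [IsOrderedRing R] {L : List ι} {s : Finset ι} {g : ι → R} {m : ℕ}
    (hs : ∀ a ∈ L, a ∈ s) (hcount : ∀ a, L.count a ≤ m) (hg : ∀ a ∈ s, 0 ≤ g a) :
    (L.map g).sum ≤ m * ∑ a ∈ s, g a := by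
  rw [sum_list_map_count, mul_sum]
  calc ∑ a ∈ L.toFinset, L.count a • g a
      ≤ ∑ a ∈ L.toFinset, m * g a := by
        refine sum_le_sum fun a ha => ?_
        rw [nsmul_eq_mul]
        exact mul_le_mul_of_nonneg_right (Nat.mono_cast (hcount a))
          (hg a (hs a (List.mem_toFinset.1 ha)))
    _ ≤ ∑ a ∈ s, m * g a :=
        sum_le_sum_of_subset_of_nonneg (fun a ha => hs a (List.mem_toFinset.1 ha))
          fun a ha _ => mul_nonneg (Nat.cast_nonneg m) (hg a ha)

section Words

variable {Ω : Type*} (S : ℕ → Ω → Ω)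

def applyWord (L : List ℕ) (ω : Ω) : Ω :=
  L.foldl (fun σ a => S a σ) ω

@[simp]
theorem applyWord_nil (ω : Ω) : applyWord S [] ω = ω :=
  rfl

@[simp]
theorem applyWord_cons (a : ℕ) (L : List ℕ) (ω : Ω) :
    applyWord S (a :: L) ω = applyWord S L (S a ω) :=
  rfl

theorem applyWord_take_succ {L : List ℕ} {k : ℕ} (hk : k < L.length) (ω : Ω) :
    applyWord S (L.take (k + 1)) ω = S L[k] (applyWord S (L.take k) ω) := by
  rw [List.take_succ_eq_append_getElem hk, applyWord, List.foldl_append]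
  rfl

variable [Fintype Ω] (ν : Ω → ℝ)

theorem sum_mul_comp_applyWord {L : List ℕ}
    (hinv : ∀ a ∈ L, ∀ g : Ω → ℝ, ∑ ω, ν ω * g (S a ω) = ∑ ω, ν ω * g ω) (g : Ω → ℝ) :
    ∑ ω, ν ω * g (applyWord S L ω) = ∑ ω, ν ω * g ω := by
  induction L generalizing g with
  | nil => rfl
  | cons a L ih =>
    simp only [applyWord_cons]
    rw [hinv a List.mem_cons_self (fun ω => g (applyWord S L ω)),
      ih (fun b hb => hinv b (List.mem_cons_of_mem a hb))]

theorem sum_mul_sq_sub_applyWord_le (hν : ∀ ω, 0 ≤ ν ω) {L : List ℕ}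
    (hinv : ∀ a ∈ L, ∀ g : Ω → ℝ, ∑ ω, ν ω * g (S a ω) = ∑ ω, ν ω * g ω) (f : Ω → ℝ) :
    ∑ ω, ν ω * (f (applyWord S L ω) - f ω) ^ 2 ≤
      L.length * (L.map fun a => ∑ ω, ν ω * (f (S a ω) - f ω) ^ 2).sum := by
  set increment : Fin L.length → Ω → ℝ := fun k ω =>
    (f (S L[k] (applyWord S (L.take k) ω)) - f (applyWord S (L.take k) ω)) ^ 2
  have telescope (ω : Ω) :
      (f (applyWord S L ω) - f ω) ^ 2 ≤ L.length * ∑ k, increment k ω := by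
    have := sq_sub_le_mul_sum_sq_sub (fun k => f (applyWord S (L.take k) ω)) L.length
    rw [sum_range] at this
    simpa [increment, applyWord_take_succ] using this
  calc ∑ ω, ν ω * (f (applyWord S L ω) - f ω) ^ 2
      ≤ ∑ ω, ν ω * (L.length * ∑ k, increment k ω) :=
        sum_le_sum fun ω _ => mul_le_mul_of_nonneg_left (telescope ω) (hν ω)
    _ = L.length * ∑ k, ∑ ω, ν ω * increment k ω := by
        simp_rw [mul_sum]
        rw [sum_comm]
        exact sum_congr rfl fun _ _ => sum_congr rfl fun _ _ => by ring
    _ = L.length * (L.map fun a => ∑ ω, ν ω * (f (S a ω) - f ω) ^ 2).sum := by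
        rw [← Fin.sum_univ_fun_getElem]
        congr 1
        refine sum_congr rfl fun k _ => ?_
        exact sum_mul_comp_applyWord S ν
          (fun a ha => hinv a (List.mem_of_mem_take ha)) (fun ω => (f (S L[k] ω) - f ω) ^ 2)

end Words

def exchangeWord (i j : ℕ) : List ℕ :=
  List.range' i (j - i) ++ (List.range' i (j - i - 1)).reverse

theorem length_exchangeWord (i j : ℕ) :
    (exchangeWord i j).length = (j - i) + (j - i - 1) := by
  simp [exchangeWord]

theorem lt_of_mem_exchangeWord {i j a : ℕ} (ha : a ∈ exchangeWord i j) : a < j := by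
  simp only [exchangeWord, List.mem_append, List.mem_reverse, List.mem_range'_1] at ha
  omega

theorem count_exchangeWord_le_two (i j a : ℕ) : (exchangeWord i j).count a ≤ 2 := by
  rw [exchangeWord, List.count_append, List.count_reverse]
  have h₁ := List.nodup_iff_count_le_one.1 (List.nodup_range' (s := i) (n := j - i)) a
  have h₂ := List.nodup_iff_count_le_one.1 (List.nodup_range' (s := i) (n := j - i - 1)) a
  omega

theorem exchange_comparison_general {Ω : Type*} [Fintype Ω] (N : ℕ)
    (ν : Ω → ℝ) (hν0 : ∀ ω, 0 ≤ ν ω)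
    (S : ℕ → Ω → Ω)
    (hinv : ∀ a, a + 1 < N → ∀ g : Ω → ℝ, ∑ ω : Ω, ν ω * g (S a ω) = ∑ ω : Ω, ν ω * g ω)
    (f : Ω → ℝ) (i j : ℕ) (hj : j < N) :
    ∑ ω : Ω, ν ω *
        (f (List.foldl (fun σ a => S a σ) ω
            (List.range' i (j - i) ++ (List.range' i (j - i - 1)).reverse)) - f ω) ^ 2 ≤
      4 * N * ∑ a ∈ Finset.range (N - 1), ∑ ω : Ω, ν ω * (f (S a ω) - f ω) ^ 2 := by
  set energy : ℕ → ℝ := fun a => ∑ ω, ν ω * (f (S a ω) - f ω) ^ 2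
  have henergy (a : ℕ) : 0 ≤ energy a := sum_nonneg fun ω _ => mul_nonneg (hν0 ω) (sq_nonneg _)
  have hword (a : ℕ) (ha : a ∈ exchangeWord i j) : a + 1 < N := by
    have := lt_of_mem_exchangeWord ha
    omega
  have hlength : ((exchangeWord i j).length : ℝ) ≤ 2 * N := by
    rw [length_exchangeWord]
    exact_mod_cast (by omega : j - i + (j - i - 1) ≤ 2 * N)
  calc ∑ ω, ν ω * (f (applyWord S (exchangeWord i j) ω) - f ω) ^ 2
      ≤ (exchangeWord i j).length * ((exchangeWord i j).map energy).sum :=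
        sum_mul_sq_sub_applyWord_le S ν hν0 (fun a ha => hinv a (hword a ha)) f
    _ ≤ (2 * N) * (2 * ∑ a ∈ range (N - 1), energy a) := by
        gcongr
        · exact List.sum_nonneg fun _ ha => by
            obtain ⟨a, -, rfl⟩ := List.mem_map.1 ha
            exact henergy a
        · exact_mod_cast List.sum_map_le_mul_sum_of_count_le
            (fun a ha => mem_range.2 (by have := hword a ha; omega))
            (count_exchangeWord_le_two i j) fun a _ => henergy a
    _ = 4 * N * ∑ a ∈ range (N - 1), energy a := by ring

/-- Let `ν` be a probability measure on a finite set `Ω`, invariant under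
transformations `S a = T_{a,a+1}` (`0 ≤ a < N−1`) exchanging adjacent blocks.  For every
`f` and `0 ≤ i < j < N`, with `T_{i,j}` defined as the palindromic composition of
nearest-neighbour exchanges moving block `i` to position `j` and back,
`ν[(f∘T_{i,j} − f)²] ≤ 4N Σ_{a} ν[(f∘T_{a,a+1} − f)²]`. -/
theorem exchange_comparison {Ω : Type*} [Fintype Ω] (N : ℕ) (hN : 2 ≤ N)
    (ν : Ω → ℝ) (hν0 : ∀ ω, 0 ≤ ν ω) (hν1 : ∑ ω : Ω, ν ω = 1)
    (S : ℕ → Ω → Ω)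
    (hinv : ∀ a, a + 1 < N → ∀ g : Ω → ℝ, ∑ ω : Ω, ν ω * g (S a ω) = ∑ ω : Ω, ν ω * g ω)
    (f : Ω → ℝ) (i j : ℕ) (hij : i < j) (hj : j < N) :
    ∑ ω : Ω, ν ω *
        (f (List.foldl (fun σ a => S a σ) ω
            (List.range' i (j - i) ++ (List.range' i (j - i - 1)).reverse)) - f ω) ^ 2 ≤
      4 * N * ∑ a ∈ Finset.range (N - 1), ∑ ω : Ω, ν ω * (f (S a ω) - f ω) ^ 2 :=
  exchange_comparison_general N ν hν0 S hinv f i j hj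
end

section
/- For n ≥ 3 and any 1 ≤ L ≤ n, the L-reversal Dirichlet form of the adjacency indicator χ satisfies E(χ,χ) ≤ 16/(n(n−1)). -/
def segRev {n : ℕ} {α : Type*} (x h : ℕ) (η : Fin n → α) : Fin n → α := fun y =>
  if (y.val + n - x % n) % n ≤ h then
    η ⟨(x + h - (y.val + n - x % n) % n) % n, Nat.mod_lt _ y.pos⟩
  else η y

/-- Letters `0` and `1` occupy adjacent vertices of the `n`-cycle. -/
def adjLet {n : ℕ} (η : Fin n → Fin n) : Prop :=
  ∃ x y : Fin n, (η x).val = 0 ∧ (η y).val = 1 ∧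
    ((x.val + 1) % n = y.val ∨ (y.val + 1) % n = x.val)

instance {n : ℕ} : DecidablePred (adjLet (n := n)) := fun η => by
  unfold adjLet; infer_instance

/-- The indicator `χ` of the adjacency event. -/
def chiInd {n : ℕ} (η : Fin n → Fin n) : ℝ := if adjLet η then 1 else 0

/-- The `L`-reversal Dirichlet form `E(f,f) = (1/(2nL)) Σ_x Σ_{ℓ≤L} ν[(R_{x,ℓ} f)²]`. -/
noncomputable def dirL (n L : ℕ) (f : (Fin n → Fin n) → ℝ) : ℝ :=
  (1 / (2 * (n : ℝ) * (L : ℝ))) * ∑ x ∈ Finset.range n, ∑ ℓ ∈ Finset.Icc 1 L,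
    (∑ η : Equiv.Perm (Fin n), (f (segRev x ℓ ⇑η) - f ⇑η) ^ 2) / (Nat.factorial n : ℝ)

/-!
Write `η^{x,ℓ} = η ∘ r` where `r` is the reflection of the cycle reversing `{x, …, x + ℓ}`.
As `r` is an involution, reindexing by `η ↦ η ∘ r` shows that `χ` jumps up as often as it
jumps down, so `Σ_η (R_{x,ℓ} χ)² = 2 #{η | χ η = 1, χ η^{x,ℓ} = 0}`. A reversal separates the
neighbours `a, a + 1` only if the segment starts at `a + 1` or ends at `a`, so for each `ℓ` at
most two `x` destroy a given adjacency, and `E(χ,χ) ≤ 2 ν(χ) / n`. Finally the positions of the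
letters `0, 1` form a uniformly distributed ordered pair of distinct vertices, of which `2n`
are adjacent, so `ν(χ) ≤ 2 / (n - 1)` and `E(χ,χ) ≤ 4 / (n (n - 1))`.
-/

open Finset Equiv

lemma val_add_one_mod_eq_iff {n : ℕ} [NeZero n] (p q : Fin n) :
    (p.val + 1) % n = q.val ↔ p + 1 = q := by
  rw [Fin.ext_iff, Fin.val_add, Fin.val_one', Nat.add_mod_mod]

section Reflection

open Fin.CommRing

variable {n : ℕ} [NeZero n]

def segRefl (x h : ℕ) : Fin n → Fin n := segRev x h id

omit [NeZero n] in
lemma segRev_eq_comp {α : Type*} (x h : ℕ) (η : Fin n → α) : segRev x h η = η ∘ segRefl x h := by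
  funext y
  simp only [segRev, segRefl, Function.comp_apply, apply_ite η, id]

lemma segRefl_apply (x h : ℕ) (y : Fin n) :
    segRefl x h y =
      if (y - (x : Fin n)).val ≤ h then (x : Fin n) + (h : Fin n) - (y - (x : Fin n)) else y := by
  have hval : (y - (x : Fin n)).val = (y.val + n - x % n) % n := by
    rw [Fin.val_sub, Fin.val_natCast]
    have := Nat.mod_lt x (NeZero.pos n)
    congr 1; omega
  unfold segRefl segRev
  simp only [id, ← hval]
  split_ifs with hd
  · ext
    dsimp only
    rw [← Fin.val_natCast, Nat.cast_sub (hd.trans (Nat.le_add_left h x)), Nat.cast_add,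
      Fin.cast_val_eq_self]
  · rfl

lemma segRefl_involutive (x h : ℕ) : Function.Involutive (segRefl (n := n) x h) := by
  intro y
  rw [segRefl_apply x h y]
  split_ifs with hd
  · have hz : (x : Fin n) + (h : Fin n) - (y - (x : Fin n)) - (x : Fin n)
        = ((h - (y - (x : Fin n)).val : ℕ) : Fin n) := by
      rw [Nat.cast_sub hd, Fin.cast_val_eq_self]; abel
    have hz' : ((x : Fin n) + (h : Fin n) - (y - (x : Fin n)) - (x : Fin n)).val ≤ h := by
      rw [hz, Fin.val_natCast]; exact (Nat.mod_le _ _).trans (Nat.sub_le _ _)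
    rw [segRefl_apply, if_pos hz']
    abel
  · rw [segRefl_apply, if_neg hd]

lemma segRefl_add_one_adj (x h : ℕ) (a : Fin n) (hstart : (x : Fin n) ≠ a + 1)
    (hend : (x : Fin n) ≠ a - (h : Fin n)) :
    segRefl x h (a + 1) + 1 = segRefl x h a ∨ segRefl x h a + 1 = segRefl x h (a + 1) := by
  set k := (a - (x : Fin n)).val with hk
  have hkn : k < n := Fin.is_lt _
  have hcast : ((k + 1 : ℕ) : Fin n) = a + 1 - (x : Fin n) := by
    rw [Nat.cast_succ, hk, Fin.cast_val_eq_self]; ring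
  have hk_ne : k + 1 ≠ n := by
    intro hke
    rw [hke, Fin.natCast_self] at hcast
    exact hstart (by linear_combination hcast)
  have hk1 : (a + 1 - (x : Fin n)).val = k + 1 := by
    rw [← hcast, Fin.val_natCast, Nat.mod_eq_of_lt (by omega)]
  rw [segRefl_apply, segRefl_apply, hk1, ← hk]
  rcases lt_trichotomy k h with hkh | rfl | hkh
  · rw [if_pos hkh.le, if_pos (Nat.succ_le_of_lt hkh)]; left; abel
  · exact absurd (by rw [hk, Fin.cast_val_eq_self]; abel) hend
  · rw [if_neg (by omega), if_neg (by omega)]; right; rfl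

lemma adjLet_comp_of_adj {η r : Fin n → Fin n} (hr : Function.Involutive r) {p q : Fin n}
    (hp : (η p).val = 0) (hq : (η q).val = 1) (hpq : r p + 1 = r q ∨ r q + 1 = r p) :
    adjLet (η ∘ r) :=
  ⟨r p, r q, by rwa [Function.comp_apply, hr p], by rwa [Function.comp_apply, hr q],
    by simpa only [val_add_one_mod_eq_iff] using hpq⟩

lemma card_filter_not_adjLet_segRev_le_two (ℓ : ℕ) {η : Fin n → Fin n} (hη : adjLet η) :
    #{x ∈ range n | ¬adjLet (segRev x ℓ η)} ≤ 2 := by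
  obtain ⟨a, hadj⟩ : ∃ a : Fin n, ∀ x : ℕ, (x : Fin n) ≠ a + 1 → (x : Fin n) ≠ a - (ℓ : Fin n) →
      adjLet (segRev x ℓ η) := by
    obtain ⟨p, q, hp, hq, hpq⟩ := hη
    simp only [val_add_one_mod_eq_iff] at hpq
    rcases hpq with rfl | rfl
    · exact ⟨p, fun x hstart hend => by
        rw [segRev_eq_comp]
        exact adjLet_comp_of_adj (segRefl_involutive x ℓ) hp hq
          (segRefl_add_one_adj x ℓ p hstart hend).symm⟩
    · exact ⟨q, fun x hstart hend => by
        rw [segRev_eq_comp]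
        exact adjLet_comp_of_adj (segRefl_involutive x ℓ) hp hq
          (segRefl_add_one_adj x ℓ q hstart hend)⟩
  calc #{x ∈ range n | ¬adjLet (segRev x ℓ η)}
      ≤ #{(a + 1).val, (a - (ℓ : Fin n)).val} := card_le_card fun x hx => by
        rw [mem_filter, mem_range] at hx
        have hcast : ∀ b : Fin n, (x : Fin n) = b → x = b.val := fun b hb => by
          rw [← hb, Fin.val_natCast, Nat.mod_eq_of_lt hx.1]
        by_contra hx'
        simp only [mem_insert, mem_singleton, not_or] at hx'
        exact hx.2 (hadj x (fun h => hx'.1 (hcast _ h)) (fun h => hx'.2 (hcast _ h)))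
    _ ≤ 2 := card_le_two

end Reflection

lemma sum_sub_sq_ite_eq_two_mul_card {α : Type*} [Fintype α] {e : α → α}
    (he : Function.Involutive e) (P : α → Prop) [DecidablePred P] :
    ∑ a, ((if P (e a) then 1 else 0) - (if P a then 1 else 0) : ℝ) ^ 2
      = 2 * #{a | P a ∧ ¬P (e a)} := by
  have hsq : ∀ a, ((if P (e a) then 1 else 0) - (if P a then 1 else 0) : ℝ) ^ 2
      = (if P (e a) ∧ ¬P (e (e a)) then 1 else 0) + if P a ∧ ¬P (e a) then 1 else 0 := by
    intro a
    rw [he a]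
    by_cases h₁ : P a <;> by_cases h₂ : P (e a) <;> simp [h₁, h₂]
  have hswap : ∑ a, (if P (e a) ∧ ¬P (e (e a)) then (1 : ℝ) else 0)
      = ∑ a, if P a ∧ ¬P (e a) then 1 else 0 :=
    Fintype.sum_bijective e he.bijective _ _ fun _ => rfl
  rw [Fintype.sum_congr _ _ hsq, sum_add_distrib, hswap, ← two_mul, natCast_card_filter]

section Permutations

variable {n : ℕ} [NeZero n]

lemma sum_sub_sq_chiInd_segRev (x ℓ : ℕ) :
    ∑ η : Perm (Fin n), (chiInd (segRev x ℓ ⇑η) - chiInd ⇑η) ^ 2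
      = 2 * #{η : Perm (Fin n) | adjLet ⇑η ∧ ¬adjLet (segRev x ℓ ⇑η)} := by
  set τ := (segRefl_involutive (n := n) x ℓ).toPerm
  have hτ : ∀ η : Perm (Fin n), segRev x ℓ ⇑η = ⇑(η * τ) := fun η => segRev_eq_comp x ℓ η
  have hmul : Function.Involutive (· * τ) := fun η => by
    dsimp only
    rw [mul_assoc, show τ * τ = 1 from Equiv.ext (segRefl_involutive x ℓ), mul_one]
  simp only [hτ, chiInd]
  exact sum_sub_sq_ite_eq_two_mul_card hmul fun η => adjLet ⇑η

lemma sum_card_adjLet_not_adjLet_segRev_le (ℓ : ℕ) :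
    ∑ x ∈ range n, #{η : Perm (Fin n) | adjLet ⇑η ∧ ¬adjLet (segRev x ℓ ⇑η)}
      ≤ 2 * #{η : Perm (Fin n) | adjLet ⇑η} := by
  calc ∑ x ∈ range n, #{η : Perm (Fin n) | adjLet ⇑η ∧ ¬adjLet (segRev x ℓ ⇑η)}
      = ∑ η ∈ {η : Perm (Fin n) | adjLet ⇑η}, #{x ∈ range n | ¬adjLet (segRev x ℓ ⇑η)} := by
        simp only [card_filter, sum_filter, ite_and]
        rw [sum_comm]
        simp only [sum_ite_irrel, sum_const_zero]
    _ ≤ ∑ η ∈ {η : Perm (Fin n) | adjLet ⇑η}, 2 :=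
        sum_le_sum fun η hη => card_filter_not_adjLet_segRev_le_two ℓ (mem_filter.1 hη).2
    _ = 2 * #{η : Perm (Fin n) | adjLet ⇑η} := by rw [sum_const, smul_eq_mul, mul_comm]

lemma sum_sub_sq_chiInd_segRev_le (ℓ : ℕ) :
    ∑ x ∈ range n, ∑ η : Perm (Fin n), (chiInd (segRev x ℓ ⇑η) - chiInd ⇑η) ^ 2
      ≤ 4 * (#{η : Perm (Fin n) | adjLet ⇑η} : ℝ) := by
  have h : ((∑ x ∈ range n, #{η : Perm (Fin n) | adjLet ⇑η ∧ ¬adjLet (segRev x ℓ ⇑η)} : ℕ) : ℝ)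
      ≤ 2 * #{η : Perm (Fin n) | adjLet ⇑η} := by
    exact_mod_cast sum_card_adjLet_not_adjLet_segRev_le ℓ
  push_cast at h
  simp only [sum_sub_sq_chiInd_segRev, ← mul_sum]
  linarith

end Permutations

section Counting

variable {α : Type*} [DecidableEq α]

lemma exists_perm_apply_eq_apply_eq {p q a b : α} (hpq : p ≠ q) (hab : a ≠ b) :
    ∃ σ : Perm α, σ p = a ∧ σ q = b := by
  have hq : swap p a q ≠ a := fun h => hpq (by simpa using (swap_apply_eq_iff.1 h).symm)
  refine ⟨swap (swap p a q) b * swap p a, ?_, ?_⟩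
  · rw [Perm.mul_apply, swap_apply_left, swap_apply_of_ne_of_ne hq.symm hab]
  · rw [Perm.mul_apply, swap_apply_left]

lemma card_perm_apply_eq_apply_eq_congr [Fintype α] (a b : α) {p q p' q' : α} (hpq : p ≠ q)
    (hpq' : p' ≠ q') :
    #{σ : Perm α | σ p = a ∧ σ q = b} = #{σ : Perm α | σ p' = a ∧ σ q' = b} := by
  obtain ⟨π, hp, hq⟩ := exists_perm_apply_eq_apply_eq hpq' hpq
  exact card_equiv (Equiv.mulRight π) fun σ => by simp [Perm.mul_apply, hp, hq]

lemma card_perm_apply_eq_apply_eq_mul [Fintype α] {p q a b : α} (hpq : p ≠ q) (hab : a ≠ b) :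
    #{σ : Perm α | σ p = a ∧ σ q = b} * (Fintype.card α * (Fintype.card α - 1))
      = (Fintype.card α).factorial := by
  have hfiber := card_eq_sum_card_fiberwise (s := univ) (t := (univ : Finset α).offDiag)
    (f := fun σ : Perm α => (σ.symm a, σ.symm b)) fun σ _ => by
      simpa using fun h => hab (σ.symm.injective h)
  have hfiber_card : ∀ pq ∈ (univ : Finset α).offDiag,
      #{σ : Perm α | (σ.symm a, σ.symm b) = pq} = #{σ : Perm α | σ p = a ∧ σ q = b} := by
    rintro ⟨p', q'⟩ hpq'
    rw [card_perm_apply_eq_apply_eq_congr a b hpq (by simpa using hpq' : p' ≠ q')]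
    congr 1
    ext σ
    simp only [mem_filter, mem_univ, true_and, Prod.ext_iff, Equiv.symm_apply_eq]
    exact and_congr eq_comm eq_comm
  rw [sum_congr rfl hfiber_card, sum_const, smul_eq_mul, offDiag_card, card_univ, card_univ,
    Fintype.card_perm] at hfiber
  rw [hfiber, Nat.mul_sub_one, mul_comm]

end Counting

lemma card_adjLet_mul_le {n : ℕ} [NeZero n] (hn : 2 ≤ n) :
    #{η : Perm (Fin n) | adjLet ⇑η} * (n * (n - 1)) ≤ 2 * n * n.factorial := by
  set z₀ : Fin n := ⟨0, by omega⟩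
  set z₁ : Fin n := ⟨1, hn⟩
  set F : Fin n → Fin n → Finset (Perm (Fin n)) := fun p q => {σ | σ p = z₀ ∧ σ q = z₁}
  have hF : ∀ p q : Fin n, p ≠ q → #(F p q) * (n * (n - 1)) = n.factorial := fun p q hpq => by
    simpa using card_perm_apply_eq_apply_eq_mul hpq (a := z₀) (b := z₁) (by simp [z₀, z₁])
  have hne : ∀ a : Fin n, a ≠ a + 1 := fun a => by simpa using (by omega : n ≠ 1)
  have hsub : ({η | adjLet ⇑η} : Finset (Perm (Fin n))) ⊆
      univ.biUnion fun a => F a (a + 1) ∪ F (a + 1) a := by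
    intro η hη
    obtain ⟨p, q, hp, hq, hpq⟩ := (mem_filter.1 hη).2
    simp only [val_add_one_mod_eq_iff] at hpq
    simp only [mem_biUnion, mem_univ, true_and, mem_union, F, mem_filter]
    rcases hpq with rfl | rfl
    · exact ⟨p, Or.inl ⟨Fin.ext hp, Fin.ext hq⟩⟩
    · exact ⟨q, Or.inr ⟨Fin.ext hp, Fin.ext hq⟩⟩
  calc #{η : Perm (Fin n) | adjLet ⇑η} * (n * (n - 1))
      ≤ (∑ a : Fin n, (#(F a (a + 1)) + #(F (a + 1) a))) * (n * (n - 1)) :=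
        Nat.mul_le_mul_right _ ((card_le_card hsub).trans
          (card_biUnion_le.trans (sum_le_sum fun a _ => card_union_le _ _)))
    _ = ∑ _a : Fin n, 2 * n.factorial := by
        rw [sum_mul]
        refine sum_congr rfl fun a _ => ?_
        rw [add_mul, hF _ _ (hne a), hF _ _ (hne a).symm, two_mul]
    _ = 2 * n * n.factorial := by rw [sum_const, card_univ, Fintype.card_fin, smul_eq_mul]; ring

lemma dirL_eq_sum_div (n L : ℕ) (f : (Fin n → Fin n) → ℝ) :
    dirL n L f = (∑ ℓ ∈ Icc 1 L, ∑ x ∈ range n, ∑ η : Perm (Fin n),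
      (f (segRev x ℓ ⇑η) - f ⇑η) ^ 2) / (2 * n * L * n.factorial) := by
  rw [dirL, sum_comm]
  simp only [← sum_div]
  field_simp

theorem adjacency_dirichlet_bound_general (n L : ℕ) (hn : 3 ≤ n) (hL1 : 1 ≤ L) :
    dirL n L (chiInd (n := n)) ≤ 16 / ((n : ℝ) * ((n : ℝ) - 1)) := by
  have : NeZero n := ⟨by omega⟩
  set A := #{η : Perm (Fin n) | adjLet ⇑η}
  have hA : (A : ℝ) * (n * (n - 1)) ≤ 2 * n * n.factorial := by
    have h := card_adjLet_mul_le (by omega : 2 ≤ n)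
    rw [← Nat.cast_le (α := ℝ)] at h
    push_cast [Nat.cast_sub (by omega : 1 ≤ n)] at h
    exact h
  have hn1 : (1 : ℝ) < n := by exact_mod_cast (by omega : 1 < n)
  have hL : (0 : ℝ) < L := by exact_mod_cast hL1
  calc dirL n L chiInd
      = (∑ ℓ ∈ Icc 1 L, ∑ x ∈ range n, ∑ η : Perm (Fin n),
          (chiInd (segRev x ℓ ⇑η) - chiInd ⇑η) ^ 2) / (2 * n * L * n.factorial) :=
        dirL_eq_sum_div n L _
    _ ≤ (∑ ℓ ∈ Icc 1 L, 4 * (A : ℝ)) / (2 * n * L * n.factorial) := by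
        gcongr with ℓ
        exact sum_sub_sq_chiInd_segRev_le ℓ
    _ = 2 * A / (n * n.factorial) := by
        rw [sum_const, Nat.card_Icc, Nat.add_sub_cancel, nsmul_eq_mul]
        field_simp
        ring
    _ ≤ 4 / (n * (n - 1)) := by
        rw [div_le_div_iff₀ (by positivity) (by nlinarith)]
        nlinarith
    _ ≤ 16 / (n * (n - 1)) := by gcongr; norm_num

/-- for `n ≥ 3` and `1 ≤ L ≤ n`, the `L`-reversal Dirichlet form of the
adjacency indicator satisfies `E(χ,χ) ≤ 16/(n(n−1))`. -/
theorem adjacency_dirichlet_bound (n L : ℕ) (hn : 3 ≤ n) (hL1 : 1 ≤ L) (hLn : L ≤ n) :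
    dirL n L (chiInd (n := n)) ≤ 16 / ((n : ℝ) * ((n : ℝ) - 1)) :=
  adjacency_dirichlet_bound_general n L hn hL1
end

section
/- For each fixed ℓ and any configuration η on the n-cycle, the number of vertices x such that letters 1 and 2 are adjacent in η but not adjacent in η^{x,ℓ} is at most 4. -/
/-- the reflection of the cycle fixing the complement of the segment `[x, x+ℓ]`. -/
def rho {n : ℕ} (x ℓ : ℕ) (y : Fin n) : Fin n :=
  if (y.val + n - x) % n ≤ ℓ then
    (⟨(x + ℓ - (y.val + n - x) % n) % n, Nat.mod_lt _ y.pos⟩ : Fin n)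
  else y

lemma mod_shift {n : ℕ} (x y : ℕ) (hx : x < n) (hy : y < n) :
    (x + (y + n - x) % n) % n = y := by
  rw [Nat.add_mod_mod]
  have h : x + (y + n - x) = y + n := by omega
  rw [h, Nat.add_mod_right, Nat.mod_eq_of_lt hy]

lemma segRev_rho {n : ℕ} {α : Type*} (x ℓ : ℕ) (hx : x < n) (η : Fin n → α) (y : Fin n) :
    segRev x ℓ η (rho x ℓ y) = η y := by
  have hn : 0 < n := lt_of_le_of_lt (Nat.zero_le x) hx
  set d := (y.val + n - x) % n with hd
  by_cases h : d ≤ ℓ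
  · have hrho : rho x ℓ y = (⟨(x + ℓ - d) % n, Nat.mod_lt _ y.pos⟩ : Fin n) := by
      rw [rho, if_pos h]
    -- compute d' for the image point
    have hmod : ((x + ℓ - d) % n + n - x % n) % n = (ℓ - d) % n := by
      rw [Nat.mod_eq_of_lt hx]
      have e1 : (x + ℓ - d) % n + n - x = (x + ℓ - d) % n + (n - x) := by omega
      rw [e1, Nat.mod_add_mod]
      have e2 : x + ℓ - d + (n - x) = (ℓ - d) + n := by omega
      rw [e2, Nat.add_mod_right]
    have hle : (ℓ - d) % n ≤ ℓ := le_trans (Nat.mod_le _ _) (Nat.sub_le _ _)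
    rw [hrho, segRev]
    simp only [hmod, if_pos hle]
    congr 1
    apply Fin.ext
    show (x + ℓ - (ℓ - d) % n) % n = y.val
    have hdm := Nat.div_add_mod (ℓ - d) n
    have e3 : x + ℓ - (ℓ - d) % n = x + d + n * ((ℓ - d) / n) := by omega
    rw [e3, Nat.add_mul_mod_self_left]
    exact mod_shift x y.val hx y.isLt
  · have hrho : rho x ℓ y = y := by rw [rho, if_neg h]
    rw [hrho, segRev]
    simp only [Nat.mod_eq_of_lt hx, ← hd, if_neg h]

lemma dv_eq {n : ℕ} (x : ℕ) (hx : x < n) (u v : Fin n) (huv : (u.val + 1) % n = v.val) :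
    (v.val + n - x) % n = ((u.val + n - x) % n + 1) % n := by
  rw [Nat.mod_add_mod]
  have e1 : u.val + n - x + 1 = u.val + 1 + (n - x) := by omega
  rw [e1, ← Nat.mod_add_mod, huv]
  have e2 : v.val + (n - x) = v.val + n - x := by omega
  rw [e2]

lemma rho_adj {n : ℕ} (x ℓ : ℕ) (hx : x < n) (u v : Fin n)
    (huv : (u.val + 1) % n = v.val) (hv : x ≠ v.val) (hu : (x + ℓ) % n ≠ u.val) :
    ((rho x ℓ u).val + 1) % n = (rho x ℓ v).val ∨
      ((rho x ℓ v).val + 1) % n = (rho x ℓ u).val := by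
  have hn : 0 < n := lt_of_le_of_lt (Nat.zero_le x) hx
  set du := (u.val + n - x) % n with hdu'
  set dv := (v.val + n - x) % n with hdv'
  have hdu_lt : du < n := Nat.mod_lt _ hn
  have hdv : dv = (du + 1) % n := dv_eq x hx u v huv
  have hu_eq : (x + du) % n = u.val := mod_shift x u.val hx u.isLt
  have hv_eq : (x + dv) % n = v.val := mod_shift x v.val hx v.isLt
  by_cases h1 : du ≤ ℓ
  · by_cases h2 : dv ≤ ℓ
    · -- both in segment
      by_cases h3 : du + 1 = n
      · -- dv = 0, so v = x : excluded
        exfalso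
        apply hv
        have h0 : dv = 0 := by rw [hdv, h3, Nat.mod_self]
        rw [← hv_eq, h0, Nat.add_zero, Nat.mod_eq_of_lt hx]
      · have hdv1 : dv = du + 1 := by
          rw [hdv, Nat.mod_eq_of_lt (by omega)]
        right
        have hru : rho x ℓ u = (⟨(x + ℓ - du) % n, Nat.mod_lt _ u.pos⟩ : Fin n) := by
          rw [rho, if_pos h1]
        have hrv : rho x ℓ v = (⟨(x + ℓ - dv) % n, Nat.mod_lt _ v.pos⟩ : Fin n) := by
          rw [rho, if_pos h2]
        rw [hru, hrv]
        show ((x + ℓ - dv) % n + 1) % n = (x + ℓ - du) % n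
        rw [Nat.mod_add_mod]
        congr 1
        omega
    · -- du ≤ ℓ < dv : forces du = ℓ, u = x + ℓ : excluded
      exfalso
      by_cases h3 : du + 1 = n
      · have h0 : dv = 0 := by rw [hdv, h3, Nat.mod_self]
        omega
      · have hdv1 : dv = du + 1 := by rw [hdv, Nat.mod_eq_of_lt (by omega)]
        have hde : du = ℓ := by omega
        exact hu (by rw [← hu_eq, hde])
  · by_cases h2 : dv ≤ ℓ
    · -- dv ≤ ℓ < du
      exfalso
      by_cases h4 : dv = 0
      · apply hv
        rw [← hv_eq, h4, Nat.add_zero, Nat.mod_eq_of_lt hx]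
      · by_cases h3 : du + 1 = n
        · have h0 : dv = 0 := by rw [hdv, h3, Nat.mod_self]
          omega
        · have hdv1 : dv = du + 1 := by rw [hdv, Nat.mod_eq_of_lt (by omega)]
          omega
    · -- both outside
      have hru : rho x ℓ u = u := by rw [rho, if_neg h1]
      have hrv : rho x ℓ v = v := by rw [rho, if_neg h2]
      rw [hru, hrv]
      exact Or.inl huv

lemma key {n : ℕ} (x ℓ : ℕ) (hx : x < n) (η : Fin n → Fin n) (a b : Fin n)
    (ha : (η a).val = 0) (hb : (η b).val = 1)
    (hab : (a.val + 1) % n = b.val ∨ (b.val + 1) % n = a.val)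
    (h1 : x ≠ a.val) (h2 : x ≠ b.val)
    (h3 : (x + ℓ) % n ≠ a.val) (h4 : (x + ℓ) % n ≠ b.val) :
    adjLet (segRev x ℓ η) := by
  refine ⟨rho x ℓ a, rho x ℓ b, ?_, ?_, ?_⟩
  · rw [segRev_rho x ℓ hx]; exact ha
  · rw [segRev_rho x ℓ hx]; exact hb
  · rcases hab with h | h
    · exact rho_adj x ℓ hx a b h h2 h3
    · exact (rho_adj x ℓ hx b a h h1 h4).symm

/-- for fixed `ℓ` and any configuration `η` (a bijection of the `n`
vertices onto the `n` letters), the number of vertices `x` such that letters `1` and `2`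
are adjacent in `η` but not in `η^{x,ℓ}` is at most `4`. -/
theorem adjacency_destroyed_count (n ℓ : ℕ) (η : Equiv.Perm (Fin n)) :
    ((Finset.range n).filter
        (fun x => adjLet ⇑η ∧ ¬ adjLet (segRev x ℓ ⇑η))).card ≤ 4 := by

  rcases Nat.eq_zero_or_pos n with hn | hn
  · subst hn; simp
  by_cases hadj : adjLet (⇑η)
  · obtain ⟨a, b, ha, hb, hab⟩ := hadj
    set S : Finset ℕ :=
      {a.val, b.val, (a.val + (n - ℓ % n)) % n, (b.val + (n - ℓ % n)) % n} with hS
    have hsub : ((Finset.range n).filter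
        (fun x => adjLet ⇑η ∧ ¬ adjLet (segRev x ℓ ⇑η))) ⊆ S := by
      intro x hxmem
      rw [Finset.mem_filter, Finset.mem_range] at hxmem
      obtain ⟨hxlt, _, hdes⟩ := hxmem
      by_contra hxS
      simp only [hS, Finset.mem_insert, Finset.mem_singleton, not_or] at hxS
      obtain ⟨e1, e2, e3, e4⟩ := hxS
      have hback : ∀ c : Fin n, (x + ℓ) % n = c.val → (c.val + (n - ℓ % n)) % n = x := by
        intro c hc
        have hml := Nat.div_add_mod ℓ n
        have hmlt : ℓ % n < n := Nat.mod_lt _ hn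
        rw [← hc, Nat.mod_add_mod]
        have e : x + ℓ + (n - ℓ % n) = x + n * (ℓ / n + 1) := by
          rw [Nat.mul_succ]; omega
        rw [e, Nat.add_mul_mod_self_left, Nat.mod_eq_of_lt hxlt]
      exact hdes (key x ℓ hxlt (⇑η) a b ha hb hab e1 e2
        (fun hc => e3 ((hback a hc).symm)) (fun hc => e4 ((hback b hc).symm)))
    refine (Finset.card_le_card hsub).trans ?_
    have t1 := Finset.card_insert_le a.val
      ({b.val, (a.val + (n - ℓ % n)) % n, (b.val + (n - ℓ % n)) % n} : Finset ℕ)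
    have t2 := Finset.card_insert_le b.val
      ({(a.val + (n - ℓ % n)) % n, (b.val + (n - ℓ % n)) % n} : Finset ℕ)
    have t3 := Finset.card_insert_le ((a.val + (n - ℓ % n)) % n)
      ({(b.val + (n - ℓ % n)) % n} : Finset ℕ)
    have t4 := Finset.card_singleton ((b.val + (n - ℓ % n)) % n)
    rw [hS]
    omega
  · have : ((Finset.range n).filter
        (fun x => adjLet ⇑η ∧ ¬ adjLet (segRev x ℓ ⇑η))) = ∅ :=
      Finset.filter_eq_empty_iff.mpr (fun x _ h => hadj h.1)
    rw [this]
    simp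
end
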